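/- arXiv:2108.05668 — 2 statements merged into one kernel-verified Lean document; each statement's English description precedes it below -/
import Mathlib

section
/- Let κ : (0,∞) → ℝ have the form κ(t) = t^{p−1} κ₁(t) with p > 0 and κ₁ continuous on [0,∞), and let (a_j)_{j≥0} be a real sequence such that the power series Σ_{j=0}^∞ a_j z^j has positive radius of convergence. Then the convolution series Σ_κ(t) = Σ_{j=0}^∞ a_j κ^{⟨j+1⟩}(t) converges for every t > 0 and defines a function of the form Σ_κ(t) = t^{r} f₁(t) with r > −1 and f₁ continuous on [0,∞); moreover, with α = min{p, 1}, the series Σ_{j=0}^∞ a_j t^{1−α} κ^{⟨j+1⟩}(t) converges uniformly on [0, T] for every T > 0. -/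
/-- The Laplace convolution `(f ∗ g)(t) = ∫_0^t f(t−τ) g(τ) dτ`. -/
noncomputable def lconv (f g : ℝ → ℝ) : ℝ → ℝ :=
  fun t => ∫ τ in (0:ℝ)..t, f (t - τ) * g τ

/-- `convNPow f j` is the `(j+1)`-st convolution power `f^{⟨j+1⟩}`
(so `convNPow f 0 = f^{⟨1⟩} = f`). -/
noncomputable def convNPow (f : ℝ → ℝ) : ℕ → ℝ → ℝ
  | 0 => f
  | j + 1 => lconv f (convNPow f j)

/-- The power series `Σ a_j z^j` has a positive radius of convergence. -/
def PosRadius (a : ℕ → ℝ) : Prop :=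
  ∃ r : ℝ, 0 < r ∧ Summable fun j => |a j| * r ^ j

/-- Membership in the space `C_{−1}(0,∞)`:
`f(t) = t^r f₁(t)` with `r > −1` and `f₁` continuous on `[0,∞)`. -/
def InCm1 (f : ℝ → ℝ) : Prop :=
  ∃ (r : ℝ) (f₁ : ℝ → ℝ), -1 < r ∧ ContinuousOn f₁ (Set.Ici (0:ℝ)) ∧
    ∀ t, 0 < t → f t = t ^ r * f₁ t

/-- `(κ, k)` is a Sonine pair from the class `L₁`. -/
def SoninePairL1 (κ k : ℝ → ℝ) : Prop :=
  (∃ (p : ℝ) (κ₁ : ℝ → ℝ), 0 < p ∧ p < 1 ∧ ContinuousOn κ₁ (Set.Ici (0:ℝ)) ∧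
      ∀ t, 0 < t → κ t = t ^ (p - 1) * κ₁ t) ∧
  (∃ (q : ℝ) (k₁ : ℝ → ℝ), 0 < q ∧ q < 1 ∧ ContinuousOn k₁ (Set.Ici (0:ℝ)) ∧
      ∀ t, 0 < t → k t = t ^ (q - 1) * k₁ t) ∧
  (∀ t, 0 < t → lconv κ k t = 1)

/-- The general fractional derivative of Riemann–Liouville type:
`(𝔻_{(k)} f)(t) = d/dt (k ∗ f)(t)`. -/
noncomputable def gfdRL (k : ℝ → ℝ) (f : ℝ → ℝ) : ℝ → ℝ :=
  deriv (lconv k f)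

/-- The general fractional derivative of Caputo type:
`(∗𝔻_{(k)} g)(t) = d/dt (k ∗ g)(t) − g(0+) k(t)` where `g(0+)` is the limit of `g` at `0` from
the right. -/
noncomputable def gfdC (k : ℝ → ℝ) (g : ℝ → ℝ) : ℝ → ℝ :=
  fun t => deriv (lconv k g) t - (Filter.limUnder (nhdsWithin 0 (Set.Ioi 0)) g) * k t

namespace ConvSeriesAux

open MeasureTheory intervalIntegral Set Filter Finset Topology

lemma contRpow {c : ℝ} (hc : 0 ≤ c) : Continuous fun t : ℝ => t ^ c :=
  continuous_iff_continuousAt.mpr fun x => Real.continuousAt_rpow_const x c (Or.inr hc)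

lemma contOn_rpow (c : ℝ) : ContinuousOn (fun s : ℝ => s ^ c) (Ioo 0 1) :=
  fun s hs => (Real.continuousAt_rpow_const s c (Or.inl (ne_of_gt hs.1))).continuousWithinAt

lemma contOn_rpow' (d : ℝ) : ContinuousOn (fun s : ℝ => (1 - s) ^ d) (Ioo 0 1) := by
  intro s hs
  exact ((Real.continuousAt_rpow_const (1-s) d (Or.inl (by have := hs.2; intro h; nlinarith))).comp
    (by fun_prop)).continuousWithinAt

lemma aesm_aux {f : ℝ → ℝ} (hf : ContinuousOn f (Ioo 0 1)) :
    AEStronglyMeasurable f (volume.restrict (Set.uIoc (0:ℝ) 1)) := by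
  rw [uIoc_of_le (zero_le_one' ℝ), ← Measure.restrict_congr_set Ioo_ae_eq_Ioc]
  exact hf.aestronglyMeasurable measurableSet_Ioo

lemma betaInt {x y : ℝ} (hx : 0 < x) (hy : 0 < y) :
    IntervalIntegrable (fun s => s ^ (x - 1) * (1 - s) ^ (y - 1)) volume 0 1 := by
  have left : ∀ {u v : ℝ}, 0 < u → IntervalIntegrable
      (fun s => s ^ (u - 1) * (1 - s) ^ (v - 1)) volume 0 (1/2) := by
    intro u v hu
    apply IntervalIntegrable.mul_continuousOn
    · exact intervalIntegrable_rpow' (by linarith)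
    · intro s hs
      rw [uIcc_of_le (by norm_num : (0:ℝ) ≤ 1/2)] at hs
      have : (1 : ℝ) - s ≠ 0 := by
        have := hs.2; intro h; nlinarith [hs.1]
      exact ((Real.continuousAt_rpow_const _ _ (Or.inl this)).comp
        (by fun_prop)).continuousWithinAt
  refine (left hx).trans ?_
  have h2 : IntervalIntegrable (fun s => (1 - s) ^ (y - 1) * (1 - (1 - s)) ^ (x - 1))
      volume (1 - 0) (1 - 1/2) := (left hy (v := x)).comp_sub_left 1
  norm_num at h2
  have h3 := h2.symm
  refine h3.congr ?_
  intro s _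
  simp only
  ring

/-- The (real) Beta function as an interval integral. -/
noncomputable def B (x y : ℝ) : ℝ := ∫ s in (0:ℝ)..1, s ^ (x - 1) * (1 - s) ^ (y - 1)

lemma B_nonneg (x y : ℝ) : 0 ≤ B x y := by
  apply intervalIntegral.integral_nonneg (by norm_num)
  intro s hs
  exact mul_nonneg (Real.rpow_nonneg hs.1 _) (Real.rpow_nonneg (by linarith [hs.2]) _)

lemma B_tendsto {p : ℝ} (hp : 0 < p) :
    Tendsto (fun i : ℕ => B (((i:ℝ)+1)*p) p) atTop (𝓝 0) := by
  have h0 : (0:ℝ) = ∫ s in (0:ℝ)..1, (0:ℝ) := by simp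
  rw [h0]
  apply intervalIntegral.tendsto_integral_filter_of_dominated_convergence
    (bound := fun s => s ^ (p-1) * (1-s) ^ (p-1))
  · refine Eventually.of_forall fun i => aesm_aux ?_
    exact (contOn_rpow _).mul (contOn_rpow' _)
  · refine Eventually.of_forall fun i => (ae_of_all _ fun s hs => ?_)
    rw [uIoc_of_le (by norm_num : (0:ℝ) ≤ 1)] at hs
    have h1 : 0 < s := hs.1
    have h2 : s ≤ 1 := hs.2
    have hb : (0:ℝ) ≤ 1 - s := by linarith
    rw [Real.norm_eq_abs, abs_mul, abs_of_nonneg (Real.rpow_nonneg h1.le _),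
      abs_of_nonneg (Real.rpow_nonneg hb _)]
    refine mul_le_mul_of_nonneg_right ?_ (Real.rpow_nonneg hb _)
    exact Real.rpow_le_rpow_of_exponent_ge h1 h2 (by nlinarith [Nat.cast_nonneg (α := ℝ) i])
  · exact betaInt hp hp
  · filter_upwards [compl_mem_ae_iff.mpr (measure_singleton (1:ℝ))] with s hs1 hs
    rw [uIoc_of_le (by norm_num : (0:ℝ) ≤ 1)] at hs
    have h1 : 0 < s := hs.1
    have h2 : s < 1 := lt_of_le_of_ne hs.2 hs1
    have hexp : Tendsto (fun i : ℕ => ((i:ℝ)+1)*p - 1) atTop atTop := by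
      have : Tendsto (fun i : ℕ => (i:ℝ)*p + (p - 1)) atTop atTop :=
        tendsto_atTop_add_const_right _ _ (tendsto_natCast_atTop_atTop.atTop_mul_const hp)
      exact this.congr (fun i => by ring)
    have hb : Tendsto (fun y : ℝ => s ^ y) atTop (𝓝 0) :=
      tendsto_rpow_atTop_of_base_lt_one s (by linarith) h2
    simpa using (hb.comp hexp).mul_const ((1-s) ^ (p-1))

lemma normBound {κ₁ g₁ : ℝ → ℝ} {c p T M₁ M₂ t : ℝ}
    (hM : ∀ s ∈ Icc 0 T, |κ₁ s| ≤ M₁) (hG : ∀ s ∈ Icc 0 T, |g₁ s| ≤ M₂)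
    (ht : t ∈ Icc (0:ℝ) T) {s : ℝ} (hs : s ∈ Ioc (0:ℝ) 1) :
    ‖s ^ (c-1) * (1-s) ^ (p-1) * (κ₁ (t*(1-s)) * g₁ (t*s))‖
      ≤ s ^ (c-1) * (1-s) ^ (p-1) * (M₁*M₂) := by
  have hs1 : (0:ℝ) ≤ 1 - s := by linarith [hs.2]
  have ht0 : (0:ℝ) ≤ t := ht.1
  have harg1 : t * (1-s) ∈ Icc (0:ℝ) T :=
    ⟨mul_nonneg ht0 hs1, le_trans (mul_le_of_le_one_right ht0 (by linarith [hs.1])) ht.2⟩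
  have harg2 : t * s ∈ Icc (0:ℝ) T :=
    ⟨mul_nonneg ht0 hs.1.le, le_trans (mul_le_of_le_one_right ht0 hs.2) ht.2⟩
  have h1 := hM _ harg1
  have h2 := hG _ harg2
  have hM₁ : 0 ≤ M₁ := le_trans (abs_nonneg _) h1
  rw [Real.norm_eq_abs, abs_mul, abs_mul, abs_of_nonneg (Real.rpow_nonneg hs.1.le _),
    abs_of_nonneg (Real.rpow_nonneg hs1 _), abs_mul]
  exact mul_le_mul_of_nonneg_left
    (mul_le_mul h1 h2 (abs_nonneg _) hM₁)
    (mul_nonneg (Real.rpow_nonneg hs.1.le _) (Real.rpow_nonneg hs1 _))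

lemma step {κ κ₁ : ℝ → ℝ} {p : ℝ} (hp : 0 < p)
    (hκ₁ : ContinuousOn κ₁ (Set.Ici 0))
    (hκ : ∀ t, 0 < t → κ t = t ^ (p - 1) * κ₁ t)
    {c : ℝ} (hc : 0 < c) {g g₁ : ℝ → ℝ}
    (hg₁ : ContinuousOn g₁ (Set.Ici 0))
    (hg : ∀ t, 0 < t → g t = t ^ (c - 1) * g₁ t) :
    ∃ H : ℝ → ℝ, ContinuousOn H (Set.Ici 0) ∧
      (∀ t, 0 < t → lconv κ g t = t ^ (p + c - 1) * H t) ∧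
      (∀ T M₁ M₂, (∀ s ∈ Set.Icc 0 T, |κ₁ s| ≤ M₁) →
        (∀ s ∈ Set.Icc 0 T, |g₁ s| ≤ M₂) →
        ∀ t ∈ Set.Icc 0 T, |H t| ≤ B c p * (M₁ * M₂)) := by
  set H : ℝ → ℝ :=
    fun t => ∫ s in (0:ℝ)..1, s ^ (c-1) * (1-s) ^ (p-1) * (κ₁ (t*(1-s)) * g₁ (t*s)) with hH
  have contInt : ∀ t : ℝ, 0 ≤ t →
      ContinuousOn (fun s => s ^ (c-1) * (1-s) ^ (p-1) * (κ₁ (t*(1-s)) * g₁ (t*s)))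
        (Ioo (0:ℝ) 1) := by
    intro t ht
    refine ((contOn_rpow _).mul (contOn_rpow' _)).mul
      ((hκ₁.comp (by fun_prop) ?_).mul (hg₁.comp (by fun_prop) ?_))
    · intro s hs; exact mul_nonneg ht (by linarith [hs.2])
    · intro s hs; exact mul_nonneg ht hs.1.le
  refine ⟨H, ?_, ?_, ?_⟩
  · -- continuity
    intro t₀ ht₀
    have hev : ∀ᶠ t in 𝓝[Ici (0:ℝ)] t₀, t ∈ Icc (0:ℝ) (t₀+1) := by
      have h1 : ∀ᶠ t in 𝓝[Ici (0:ℝ)] t₀, t ∈ Ici (0:ℝ) := eventually_mem_nhdsWithin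
      have h2 : ∀ᶠ t in 𝓝[Ici (0:ℝ)] t₀, t ∈ Iic (t₀+1) :=
        mem_nhdsWithin_of_mem_nhds (Iic_mem_nhds (lt_add_one t₀))
      exact (h1.and h2).mono fun t ht => ⟨ht.1, ht.2⟩
    obtain ⟨M₁, hM₁⟩ := (isCompact_Icc (a := (0:ℝ)) (b := t₀+1)).exists_bound_of_continuousOn
      (hκ₁.mono (Icc_subset_Ici_self))
    obtain ⟨M₂, hM₂⟩ := (isCompact_Icc (a := (0:ℝ)) (b := t₀+1)).exists_bound_of_continuousOn
      (hg₁.mono (Icc_subset_Ici_self))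
    simp only [Real.norm_eq_abs] at hM₁ hM₂
    apply intervalIntegral.continuousWithinAt_of_dominated_interval
      (bound := fun s => s ^ (c-1) * (1-s) ^ (p-1) * (M₁*M₂))
    · exact hev.mono fun t ht => aesm_aux (contInt t ht.1)
    · refine hev.mono fun t ht => ae_of_all _ fun s hs => ?_
      rw [uIoc_of_le (zero_le_one' ℝ)] at hs
      exact normBound hM₁ hM₂ ht hs
    · exact (betaInt hc hp).mul_const _
    · refine ae_of_all _ fun s hs => ?_
      rw [uIoc_of_le (zero_le_one' ℝ)] at hs
      have hs1 : (0:ℝ) ≤ 1 - s := by linarith [hs.2]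
      have : ContinuousOn
          (fun t => s ^ (c-1) * (1-s) ^ (p-1) * (κ₁ (t*(1-s)) * g₁ (t*s))) (Ici (0:ℝ)) := by
        refine continuousOn_const.mul ((hκ₁.comp (by fun_prop) ?_).mul
          (hg₁.comp (by fun_prop) ?_))
        · intro t ht; exact mul_nonneg ht hs1
        · intro t ht; exact mul_nonneg ht hs.1.le
      exact this t₀ ht₀
  · -- representation
    intro t ht
    have htne : t ≠ 0 := ne_of_gt ht
    have e1 : lconv κ g t = ∫ τ in (0:ℝ)..t,
        ((t-τ) ^ (p-1) * κ₁ (t-τ)) * (τ ^ (c-1) * g₁ τ) := by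
      refine intervalIntegral.integral_congr_ae ?_
      filter_upwards [compl_mem_ae_iff.mpr (measure_singleton t)] with τ hτ1 hτ
      rw [uIoc_of_le ht.le] at hτ
      have hτt : τ < t := lt_of_le_of_ne hτ.2 hτ1
      rw [hκ _ (by linarith), hg _ hτ.1]
    have e2 : ∫ s in (0:ℝ)..1,
        ((t-t*s) ^ (p-1) * κ₁ (t-t*s)) * ((t*s) ^ (c-1) * g₁ (t*s))
        = t⁻¹ • ∫ τ in (0:ℝ)..t, ((t-τ) ^ (p-1) * κ₁ (t-τ)) * (τ ^ (c-1) * g₁ τ) := by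
      have := intervalIntegral.integral_comp_mul_left
        (fun τ => ((t-τ) ^ (p-1) * κ₁ (t-τ)) * (τ ^ (c-1) * g₁ τ)) htne (a := 0) (b := 1)
      simpa using this
    have e3 : ∫ s in (0:ℝ)..1,
        ((t-t*s) ^ (p-1) * κ₁ (t-t*s)) * ((t*s) ^ (c-1) * g₁ (t*s))
        = t ^ (p+c-2) * H t := by
      rw [hH]
      rw [← intervalIntegral.integral_const_mul]
      refine intervalIntegral.integral_congr_ae ?_
      filter_upwards [compl_mem_ae_iff.mpr (measure_singleton (1:ℝ))] with s hs1 hs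
      rw [uIoc_of_le (zero_le_one' ℝ)] at hs
      have hslt : s < 1 := lt_of_le_of_ne hs.2 hs1
      have h1s : (0:ℝ) ≤ 1 - s := by linarith
      have key1 : t - t*s = t * (1-s) := by ring
      have key2 : (t*(1-s)) ^ (p-1) = t ^ (p-1) * (1-s) ^ (p-1) :=
        Real.mul_rpow ht.le h1s
      have key3 : (t*s) ^ (c-1) = t ^ (c-1) * s ^ (c-1) :=
        Real.mul_rpow ht.le hs.1.le
      rw [key1, key2, key3]
      have key4 : t ^ (p+c-2) = t ^ (p-1) * t ^ (c-1) := by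
        rw [← Real.rpow_add ht]; ring_nf
      rw [key4]; ring
    have e4 : (t:ℝ) ^ (p+c-1) = t * t ^ (p+c-2) := by
      nth_rewrite 2 [← Real.rpow_one t]
      rw [← Real.rpow_add ht]; ring_nf
    have e2' : (∫ τ in (0:ℝ)..t, ((t-τ) ^ (p-1) * κ₁ (t-τ)) * (τ ^ (c-1) * g₁ τ))
        = t * ∫ s in (0:ℝ)..1, ((t-t*s) ^ (p-1) * κ₁ (t-t*s)) * ((t*s) ^ (c-1) * g₁ (t*s)) := by
      rw [e2, smul_eq_mul, ← mul_assoc, mul_inv_cancel₀ htne, one_mul]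
    rw [e1, e2', e3, e4]; ring
  · -- bound
    intro T M₁ M₂ hM₁ hM₂ t ht
    have hb : |H t| ≤ |∫ s in (0:ℝ)..1, s ^ (c-1) * (1-s) ^ (p-1) * (M₁*M₂)| := by
      rw [hH, ← Real.norm_eq_abs]
      refine intervalIntegral.norm_integral_le_abs_of_norm_le ?_ ((betaInt hc hp).mul_const _)
      rw [ae_restrict_iff' measurableSet_uIoc]
      refine ae_of_all _ fun s hs => ?_
      rw [uIoc_of_le (zero_le_one' ℝ)] at hs
      exact normBound hM₁ hM₂ ht hs
    rw [intervalIntegral.integral_mul_const] at hb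
    have hBnn : 0 ≤ B c p := B_nonneg c p
    have hMnn : 0 ≤ M₁ * M₂ :=
      mul_nonneg (le_trans (abs_nonneg _) (hM₁ 0 ⟨le_refl 0, ht.1.trans ht.2⟩))
        (le_trans (abs_nonneg _) (hM₂ 0 ⟨le_refl 0, ht.1.trans ht.2⟩))
    calc |H t| ≤ |B c p * (M₁*M₂)| := by rw [B] at *; exact hb
    _ = B c p * (M₁*M₂) := abs_of_nonneg (mul_nonneg hBnn hMnn)

lemma rep {κ κ₁ : ℝ → ℝ} {p : ℝ} (hp : 0 < p)
    (hκ₁ : ContinuousOn κ₁ (Set.Ici 0))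
    (hκ : ∀ t, 0 < t → κ t = t ^ (p - 1) * κ₁ t) :
    ∀ j : ℕ, ∃ h : ℝ → ℝ, ContinuousOn h (Set.Ici 0) ∧
      (∀ t, 0 < t → convNPow κ j t = t ^ (((j:ℝ)+1)*p - 1) * h t) ∧
      (∀ T M₁, (∀ s ∈ Set.Icc 0 T, |κ₁ s| ≤ M₁) →
        ∀ t ∈ Set.Icc 0 T,
          |h t| ≤ M₁ ^ (j+1) * ∏ i ∈ Finset.range j, B (((i:ℝ)+1)*p) p) := by
  intro j
  induction j with
  | zero =>
    refine ⟨κ₁, hκ₁, fun t ht => ?_, fun T M₁ hM₁ t ht => ?_⟩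
    · have : ((0:ℕ):ℝ) + 1 = 1 := by norm_num
      rw [this, one_mul]
      exact hκ t ht
    · simpa using hM₁ t ht
  | succ j ih =>
    obtain ⟨h, hcont, hrep, hbound⟩ := ih
    have hc : (0:ℝ) < ((j:ℝ)+1)*p := by positivity
    obtain ⟨H, Hcont, Hrep, Hbound⟩ :=
      step hp hκ₁ hκ hc hcont (g := convNPow κ j) (fun t ht => by
        have := hrep t ht
        simpa using this)
    refine ⟨H, Hcont, fun t ht => ?_, fun T M₁ hM₁ t ht => ?_⟩
    · have e2 : ((j+1:ℕ):ℝ) + 1 = (j:ℝ) + 1 + 1 := by push_cast; ring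
      show lconv κ (convNPow κ j) t = _
      rw [e2, Hrep t ht]
      ring_nf
    · have hb := Hbound T M₁ (M₁ ^ (j+1) * ∏ i ∈ Finset.range j, B (((i:ℝ)+1)*p) p)
        hM₁ (hbound T M₁ hM₁) t ht
      calc |H t| ≤ B (((j:ℝ)+1)*p) p
            * (M₁ * (M₁ ^ (j+1) * ∏ i ∈ Finset.range j, B (((i:ℝ)+1)*p) p)) := hb
      _ = M₁ ^ (j+1+1) * ∏ i ∈ Finset.range (j+1), B (((i:ℝ)+1)*p) p := by
          rw [Finset.prod_range_succ, pow_succ]; ring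

lemma sumKey {a : ℕ → ℝ} {r : ℝ} (hr : 0 < r) (hsum : Summable fun j => |a j| * r ^ j)
    {p : ℝ} (hp : 0 < p) (C : ℝ) (hC : 0 ≤ C) :
    Summable fun j => |a j| * C ^ j * ∏ i ∈ Finset.range j, B (((i:ℝ)+1)*p) p := by
  set ε : ℝ := r / (C + 1) with hε
  have hεpos : 0 < ε := by positivity
  obtain ⟨N, hN⟩ := (Filter.eventually_atTop).mp
    ((B_tendsto hp).eventually_lt_const hεpos)
  rw [← summable_nat_add_iff N]
  have hsum' : Summable fun n => |a (n + N)| * r ^ n := by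
    have h1 : Summable fun n => |a (n + N)| * r ^ (n + N) :=
      (summable_nat_add_iff N).mpr hsum
    have h2 := h1.mul_right ((r:ℝ) ^ N)⁻¹
    refine h2.congr fun n => ?_
    rw [pow_add]
    field_simp
  refine Summable.of_nonneg_of_le (fun n => ?_) (fun n => ?_)
    (hsum'.mul_right ((C ^ N * ∏ i ∈ Finset.range N, B (((i:ℝ)+1)*p) p)))
  · exact mul_nonneg (mul_nonneg (abs_nonneg _) (pow_nonneg hC _))
      (Finset.prod_nonneg fun i _ => B_nonneg _ _)
  · have key : C ^ (n + N) * ∏ i ∈ Finset.range (n + N), B (((i:ℝ)+1)*p) p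
        ≤ r ^ n * (C ^ N * ∏ i ∈ Finset.range N, B (((i:ℝ)+1)*p) p) := by
      rw [add_comm n N, Finset.prod_range_add, pow_add]
      have h3 : C ^ n * ∏ i ∈ Finset.range n, B ((((N + i : ℕ):ℝ)+1)*p) p ≤ r ^ n := by
        have hdist : C ^ n * ∏ i ∈ Finset.range n, B ((((N + i : ℕ):ℝ)+1)*p) p
            = ∏ i ∈ Finset.range n, (C * B ((((N + i : ℕ):ℝ)+1)*p) p) := by
          rw [Finset.prod_mul_distrib, Finset.prod_const, Finset.card_range]
        rw [hdist, show r ^ n = ∏ _i ∈ Finset.range n, r from by rw [Finset.prod_const, Finset.card_range]]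
        refine Finset.prod_le_prod (fun i _ => mul_nonneg hC (B_nonneg _ _)) (fun i _ => ?_)
        have hBi := (hN (N + i) (Nat.le_add_right N i)).le
        refine (mul_le_mul_of_nonneg_left hBi hC).trans ?_
        have hC1 : (0:ℝ) < C + 1 := by linarith
        rw [hε, mul_div_assoc', div_le_iff₀ hC1]
        nlinarith
      have h4 : (0:ℝ) ≤ C ^ N * ∏ i ∈ Finset.range N, B (((i:ℝ)+1)*p) p :=
        mul_nonneg (pow_nonneg hC _) (Finset.prod_nonneg fun i _ => B_nonneg _ _)
      calc C ^ N * C ^ n * ((∏ i ∈ Finset.range N, B (((i:ℝ)+1)*p) p)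
            * ∏ i ∈ Finset.range n, B ((((N + i : ℕ):ℝ)+1)*p) p)
          = (C ^ n * ∏ i ∈ Finset.range n, B ((((N + i : ℕ):ℝ)+1)*p) p)
            * (C ^ N * ∏ i ∈ Finset.range N, B (((i:ℝ)+1)*p) p) := by ring
        _ ≤ r ^ n * (C ^ N * ∏ i ∈ Finset.range N, B (((i:ℝ)+1)*p) p) :=
            mul_le_mul_of_nonneg_right h3 h4
    calc |a (n + N)| * C ^ (n + N) * ∏ i ∈ Finset.range (n + N), B (((i:ℝ)+1)*p) p
        = |a (n + N)| * (C ^ (n + N) * ∏ i ∈ Finset.range (n + N), B (((i:ℝ)+1)*p) p) := by ring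
      _ ≤ |a (n + N)| * (r ^ n * (C ^ N * ∏ i ∈ Finset.range N, B (((i:ℝ)+1)*p) p)) :=
          mul_le_mul_of_nonneg_left key (abs_nonneg _)
      _ = |a (n + N)| * r ^ n * (C ^ N * ∏ i ∈ Finset.range N, B (((i:ℝ)+1)*p) p) := by ring

end ConvSeriesAux
open ConvSeriesAux MeasureTheory intervalIntegral Set Filter Finset Topology in
/-- Theorem 3 / Theorem `t11` of the paper: convergence of convolution series. -/
theorem convolution_series_convergence
    (κ κ₁ : ℝ → ℝ) (p : ℝ) (hp : 0 < p)
    (hκ₁ : ContinuousOn κ₁ (Set.Ici (0:ℝ)))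
    (hκ : ∀ t, 0 < t → κ t = t ^ (p - 1) * κ₁ t)
    (a : ℕ → ℝ) (ha : PosRadius a) :
    (∀ t, 0 < t → Summable fun j => a j * convNPow κ j t) ∧
    (∃ (r : ℝ) (f₁ : ℝ → ℝ), -1 < r ∧ ContinuousOn f₁ (Set.Ici (0:ℝ)) ∧
      ∀ t, 0 < t → (∑' j, a j * convNPow κ j t) = t ^ r * f₁ t) ∧
    (∀ T, 0 < T →
      TendstoUniformlyOn
        (fun (N : ℕ) (t : ℝ) => ∑ j ∈ Finset.range N, a j * (t ^ (1 - min p 1) * convNPow κ j t))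
        (fun t => ∑' j, a j * (t ^ (1 - min p 1) * convNPow κ j t))
        Filter.atTop (Set.Icc 0 T)) := by
  obtain ⟨r, hr, hsum⟩ := ha
  choose h hcont hrep hbound using ConvSeriesAux.rep hp hκ₁ hκ
  set P : ℕ → ℝ := fun j => ∏ i ∈ Finset.range j, ConvSeriesAux.B (((i:ℝ)+1)*p) p with hP
  have hPnn : ∀ j, 0 ≤ P j := fun j => Finset.prod_nonneg fun i _ => B_nonneg _ _
  have getM : ∀ T : ℝ, ∃ M : ℝ, 0 ≤ M ∧ ∀ s ∈ Icc (0:ℝ) T, |κ₁ s| ≤ M := by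
    intro T
    obtain ⟨M, hM⟩ := (isCompact_Icc (a := (0:ℝ)) (b := T)).exists_bound_of_continuousOn
      (hκ₁.mono Icc_subset_Ici_self)
    exact ⟨max M 0, le_max_right _ _,
      fun s hs => le_trans (by simpa using hM s hs) (le_max_left _ _)⟩
  have hSK : ∀ C : ℝ, 0 ≤ C → Summable fun j => |a j| * C ^ j * P j :=
    fun C hC => sumKey hr hsum hp C hC
  have hsplit : ∀ t : ℝ, 0 < t → ∀ j : ℕ,
      t ^ (((j:ℝ)+1)*p - 1) = t ^ (p-1) * (t ^ p) ^ j := by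
    intro t ht j
    rw [show ((j:ℝ)+1)*p - 1 = (p-1) + p*(j:ℝ) from by ring, Real.rpow_add ht,
      Real.rpow_mul ht.le, Real.rpow_natCast]
  have habs : ∀ j t, 0 < t → |convNPow κ j t| = t ^ (((j:ℝ)+1)*p - 1) * |h j t| := by
    intro j t ht
    rw [hrep j t ht, abs_mul, abs_of_nonneg (Real.rpow_nonneg ht.le _)]
  refine ⟨?_, ?_, ?_⟩
  · -- part 1: pointwise summability
    intro t ht
    obtain ⟨M, hM0, hM⟩ := getM t
    refine Summable.of_norm_bounded
      (g := fun j => (t ^ (p-1) * M) * (|a j| * (t ^ p * M) ^ j * P j))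
      ((hSK (t ^ p * M) (mul_nonneg (Real.rpow_nonneg ht.le _) hM0)).mul_left _) ?_
    intro j
    rw [Real.norm_eq_abs, abs_mul, habs j t ht]
    have hb := hbound j t M hM t ⟨ht.le, le_refl t⟩
    calc |a j| * (t ^ (((j:ℝ)+1)*p - 1) * |h j t|)
        ≤ |a j| * (t ^ (((j:ℝ)+1)*p - 1) * (M ^ (j+1) * P j)) :=
          mul_le_mul_of_nonneg_left
            (mul_le_mul_of_nonneg_left hb (Real.rpow_nonneg ht.le _)) (abs_nonneg _)
      _ = (t ^ (p-1) * M) * (|a j| * (t ^ p * M) ^ j * P j) := by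
          rw [hsplit t ht j, mul_pow, pow_succ]; ring
  · -- part 2: C_{-1} representation
    refine ⟨p - 1, fun t => ∑' j, a j * (t ^ ((j:ℝ)*p) * h j t), by linarith, ?_, ?_⟩
    · -- continuity of f₁ on [0,∞)
      intro t₀ ht₀
      have ht₀' : (0:ℝ) ≤ t₀ := ht₀
      set T : ℝ := t₀ + 1 with hT
      obtain ⟨M, hM0, hM⟩ := getM T
      have hu : Summable fun j => |a j| * (T ^ p * M) ^ j * P j * M :=
        (hSK (T ^ p * M) (mul_nonneg (Real.rpow_nonneg (by linarith) _) hM0)).mul_right M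
      have hUnif : TendstoUniformlyOn
          (fun (s : Finset ℕ) t => ∑ j ∈ s, a j * (t ^ ((j:ℝ)*p) * h j t))
          (fun t => ∑' j, a j * (t ^ ((j:ℝ)*p) * h j t)) atTop (Icc 0 T) := by
        refine tendstoUniformlyOn_tsum hu ?_
        intro j t ht
        have hjp : (0:ℝ) ≤ (j:ℝ)*p := by positivity
        have hb := hbound j T M hM t ht
        rw [Real.norm_eq_abs, abs_mul, abs_mul,
          abs_of_nonneg (Real.rpow_nonneg ht.1 _)]
        calc |a j| * (t ^ ((j:ℝ)*p) * |h j t|)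
            ≤ |a j| * (T ^ ((j:ℝ)*p) * (M ^ (j+1) * P j)) :=
              mul_le_mul_of_nonneg_left
                (mul_le_mul (Real.rpow_le_rpow ht.1 ht.2 hjp) hb
                  (abs_nonneg _) (Real.rpow_nonneg (le_trans ht.1 ht.2) _)) (abs_nonneg _)
          _ = |a j| * (T ^ p * M) ^ j * P j * M := by
              rw [show (j:ℝ)*p = p*(j:ℝ) from by ring, Real.rpow_mul (by linarith : (0:ℝ) ≤ T),
                Real.rpow_natCast, mul_pow, pow_succ]
              ring
      have hcontOn : ContinuousOn (fun t => ∑' j, a j * (t ^ ((j:ℝ)*p) * h j t)) (Icc 0 T) := by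
        refine hUnif.continuousOn (Eventually.of_forall fun s => ?_).frequently
        refine continuousOn_finset_sum s fun j _ => ?_
        exact continuousOn_const.mul
          (((contRpow (by positivity : (0:ℝ) ≤ (j:ℝ)*p)).continuousOn).mul
            ((hcont j).mono (Icc_subset_Ici_self)))
      have hmem : Icc (0:ℝ) T ∈ 𝓝[Ici (0:ℝ)] t₀ := by
        rw [← Set.Ici_inter_Iic]
        exact inter_mem self_mem_nhdsWithin
          (mem_nhdsWithin_of_mem_nhds (Iic_mem_nhds (lt_add_one t₀)))
      exact (hcontOn t₀ ⟨ht₀', by linarith⟩).mono_of_mem_nhdsWithin hmem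
    · -- representation
      intro t ht
      have key : ∀ j, a j * convNPow κ j t = t ^ (p-1) * (a j * (t ^ ((j:ℝ)*p) * h j t)) := by
        intro j
        rw [hrep j t ht, show ((j:ℝ)+1)*p - 1 = (p-1) + (j:ℝ)*p from by ring,
          Real.rpow_add ht]
        ring
      rw [tsum_congr key, tsum_mul_left]
  · -- part 3: uniform convergence
    intro T hT
    obtain ⟨M, hM0, hM⟩ := getM T
    set α : ℝ := min p 1 with hα
    have hαp : α ≤ p := min_le_left _ _
    have hpα : (0:ℝ) ≤ p - α := by linarith
    have hTnn : (0:ℝ) ≤ T := hT.le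
    refine tendstoUniformlyOn_tsum_nat
      (u := fun j => |a j| * (T ^ p * M) ^ j * P j * (M * T ^ (p - α))
        + (if j = 0 then |a 0 * κ 0| else 0)) ?_ ?_
    · refine Summable.add
        ((hSK (T ^ p * M) (mul_nonneg (Real.rpow_nonneg hTnn _) hM0)).mul_right _) ?_
      refine summable_of_ne_finset_zero (s := {0}) fun j hj => ?_
      simp only [Finset.mem_singleton] at hj
      exact if_neg hj
    · intro j t ht
      have hunn : (0:ℝ) ≤ |a j| * (T ^ p * M) ^ j * P j * (M * T ^ (p - α)) := by
        have : (0:ℝ) ≤ (T ^ p * M) ^ j :=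
          pow_nonneg (mul_nonneg (Real.rpow_nonneg hTnn _) hM0) _
        have h2 : (0:ℝ) ≤ M * T ^ (p - α) := mul_nonneg hM0 (Real.rpow_nonneg hTnn _)
        exact mul_nonneg (mul_nonneg (mul_nonneg (abs_nonneg _) this) (hPnn j)) h2
      rcases eq_or_lt_of_le ht.1 with h0 | h0
      · -- t = 0
        rw [← h0]
        match j with
        | 0 =>
          have habs0 : |(0:ℝ) ^ (1 - α)| ≤ 1 := by
            rcases eq_or_ne (1 - α) 0 with hz | hz
            · rw [hz, Real.rpow_zero]; norm_num
            · rw [Real.zero_rpow hz]; norm_num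
          simp only [if_pos rfl]
          refine le_add_of_nonneg_of_le hunn ?_
          calc ‖a 0 * ((0:ℝ) ^ (1 - α) * convNPow κ 0 0)‖
              = |a 0| * (|(0:ℝ) ^ (1 - α)| * |κ 0|) := by
                rw [Real.norm_eq_abs, abs_mul, abs_mul]; rfl
            _ ≤ |a 0| * (1 * |κ 0|) := by gcongr
            _ = |a 0 * κ 0| := by rw [abs_mul]; ring
        | (j+1) =>
          have hz : convNPow κ (j+1) 0 = 0 := intervalIntegral.integral_same
          rw [hz]
          simp only [mul_zero, norm_zero]
          refine add_nonneg hunn ?_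
          split <;> positivity
      · -- 0 < t
        refine le_add_of_le_of_nonneg ?_ (by split <;> positivity)
        rw [Real.norm_eq_abs, abs_mul, abs_mul, abs_of_nonneg (Real.rpow_nonneg ht.1 _),
          habs j t h0]
        have hb := hbound j T M hM t ht
        have hexp : t ^ (1-α) * t ^ (((j:ℝ)+1)*p - 1) = t ^ ((p - α) + p*(j:ℝ)) := by
          rw [← Real.rpow_add h0]
          congr 1
          ring
        calc |a j| * (t ^ (1-α) * (t ^ (((j:ℝ)+1)*p - 1) * |h j t|))
            ≤ |a j| * (t ^ (1-α) * (t ^ (((j:ℝ)+1)*p - 1) * (M ^ (j+1) * P j))) :=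
              mul_le_mul_of_nonneg_left (mul_le_mul_of_nonneg_left
                (mul_le_mul_of_nonneg_left hb (Real.rpow_nonneg ht.1 _))
                (Real.rpow_nonneg ht.1 _)) (abs_nonneg _)
          _ = |a j| * (t ^ ((p - α) + p*(j:ℝ)) * (M ^ (j+1) * P j)) := by
              rw [← hexp]; ring
          _ ≤ |a j| * (T ^ ((p - α) + p*(j:ℝ)) * (M ^ (j+1) * P j)) :=
              mul_le_mul_of_nonneg_left
                (mul_le_mul_of_nonneg_right
                  (Real.rpow_le_rpow ht.1 ht.2 (by positivity))
                  (mul_nonneg (pow_nonneg hM0 _) (hPnn j))) (abs_nonneg _)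
          _ = |a j| * (T ^ p * M) ^ j * P j * (M * T ^ (p - α)) := by
              rw [Real.rpow_add hT, Real.rpow_mul hTnn, Real.rpow_natCast, mul_pow, pow_succ]
              ring
end

section
/- Let (κ, k) be a Sonine pair from the class L₁ and let (a_j)_{j≥0} be a real sequence such that the power series Σ_{j=0}^∞ a_j z^j has positive radius of convergence. Then for all t > 0, (k ∗ Σ_{j=0}^∞ a_j κ^{⟨j+1⟩})(t) = a_0 + ∫_0^t Σ_{j=0}^∞ a_{j+1} κ^{⟨j+1⟩}(τ) dτ. -/
open MeasureTheory intervalIntegral Set Filter Function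


lemma measurable_rpow_const' (r : ℝ) : Measurable fun x : ℝ => x ^ r :=
  measurable_id.pow measurable_const

lemma lconv_comm (f g : ℝ → ℝ) (t : ℝ) : lconv f g t = lconv g f t := by
  unfold lconv
  have h1 : (∫ τ in (0:ℝ)..t, f (t - τ) * g τ)
      = ∫ τ in (0:ℝ)..t, (fun y => g (t - y) * f y) (t - τ) := by
    refine intervalIntegral.integral_congr fun τ _ => ?_
    simp only [sub_sub_cancel]; ring
  rw [h1, intervalIntegral.integral_comp_sub_left (fun y => g (t - y) * f y) t]
  simp

lemma intervalIntegrable_beta_scaled {b c t : ℝ} (hb : 0 < b) (hc : 0 < c) (ht : 0 < t) :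
    IntervalIntegrable (fun τ => (t - τ) ^ (b-1) * τ ^ (c-1)) volume 0 t := by
  have hmeas : Measurable fun τ : ℝ => (t - τ) ^ (b-1) * τ ^ (c-1) :=
    ((measurable_rpow_const' _).comp (measurable_const.sub measurable_id)).mul
      (measurable_rpow_const' _)
  set K1 : ℝ := max ((t/2) ^ (b-1)) (t ^ (b-1)) with hK1
  have hK1b : ∀ u : ℝ, t/2 ≤ u → u ≤ t → u ^ (b-1) ≤ K1 := by
    intro u h1 h2
    rcases le_or_gt (b-1) 0 with hb1 | hb1
    · exact le_trans (Real.rpow_le_rpow_of_nonpos (by linarith) h1 hb1) (le_max_left _ _)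
    · exact le_trans (Real.rpow_le_rpow (by linarith) h2 hb1.le) (le_max_right _ _)
  set K2 : ℝ := max ((t/2) ^ (c-1)) (t ^ (c-1)) with hK2
  have hK2b : ∀ u : ℝ, t/2 ≤ u → u ≤ t → u ^ (c-1) ≤ K2 := by
    intro u h1 h2
    rcases le_or_gt (c-1) 0 with hc1 | hc1
    · exact le_trans (Real.rpow_le_rpow_of_nonpos (by linarith) h1 hc1) (le_max_left _ _)
    · exact le_trans (Real.rpow_le_rpow (by linarith) h2 hc1.le) (le_max_right _ _)
  have piece1 : IntegrableOn (fun τ => (t - τ) ^ (b-1) * τ ^ (c-1)) (Ioc 0 (t/2)) volume := by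
    have hmaj : IntegrableOn (fun τ : ℝ => K1 * τ ^ (c-1)) (Ioc 0 (t/2)) volume := by
      have := (intervalIntegrable_rpow' (a := 0) (b := t/2) (r := c-1)
        (by linarith)).const_mul K1
      exact (intervalIntegrable_iff_integrableOn_Ioc_of_le (by linarith)).mp this
    refine hmaj.mono' hmeas.aestronglyMeasurable ?_
    filter_upwards [ae_restrict_mem measurableSet_Ioc] with τ hτ
    have h0 : ‖t - τ‖ = t - τ := by rw [Real.norm_eq_abs]; exact abs_of_nonneg (by linarith [hτ.2])
    have h1 : ‖τ‖ = τ := by rw [Real.norm_eq_abs]; exact abs_of_nonneg hτ.1.le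
    rw [norm_mul, Real.norm_rpow_of_nonneg (by linarith [hτ.2] : (0:ℝ) ≤ t - τ),
      Real.norm_rpow_of_nonneg hτ.1.le, h0, h1]
    exact mul_le_mul_of_nonneg_right
      (hK1b _ (by linarith [hτ.2]) (by linarith [hτ.1])) (Real.rpow_nonneg hτ.1.le _)
  have piece2 : IntegrableOn (fun τ => (t - τ) ^ (b-1) * τ ^ (c-1)) (Ioc (t/2) t) volume := by
    have hmaj : IntegrableOn (fun τ : ℝ => K2 * (t - τ) ^ (b-1)) (Ioc (t/2) t) volume := by
      have h0 : IntervalIntegrable (fun x : ℝ => x ^ (b-1)) volume (t/2) 0 :=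
        intervalIntegrable_rpow' (by linarith)
      have h1 := (h0.comp_sub_left t).const_mul K2
      rw [sub_zero] at h1
      rw [show t - t/2 = t/2 by ring] at h1
      exact (intervalIntegrable_iff_integrableOn_Ioc_of_le (by linarith)).mp h1
    refine hmaj.mono' hmeas.aestronglyMeasurable ?_
    filter_upwards [ae_restrict_mem measurableSet_Ioc] with τ hτ
    have h0 : ‖t - τ‖ = t - τ := by rw [Real.norm_eq_abs]; exact abs_of_nonneg (by linarith [hτ.2])
    have h1 : ‖τ‖ = τ := by rw [Real.norm_eq_abs]; exact abs_of_nonneg (by linarith [hτ.1])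
    rw [norm_mul, Real.norm_rpow_of_nonneg (by linarith [hτ.2] : (0:ℝ) ≤ t - τ),
      Real.norm_rpow_of_nonneg (by linarith [hτ.1] : (0:ℝ) ≤ τ), h0, h1, mul_comm]
    exact mul_le_mul_of_nonneg_right (hK2b _ hτ.1.le hτ.2)
      (Real.rpow_nonneg (by linarith [hτ.2]) _)
  rw [intervalIntegrable_iff_integrableOn_Ioc_of_le ht.le,
    ← Set.Ioc_union_Ioc_eq_Ioc (by linarith : (0:ℝ) ≤ t/2) (by linarith : t/2 ≤ t)]
  exact piece1.union piece2

lemma intervalIntegrable_beta {b c : ℝ} (hb : 0 < b) (hc : 0 < c) :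
    IntervalIntegrable (fun s => (1 - s) ^ (b-1) * s ^ (c-1)) volume 0 1 :=
  intervalIntegrable_beta_scaled hb hc one_pos

noncomputable def betaI (b c : ℝ) : ℝ := ∫ s in (0:ℝ)..1, (1 - s) ^ (b-1) * s ^ (c-1)

lemma betaI_nonneg (b c : ℝ) : 0 ≤ betaI b c := by
  refine intervalIntegral.integral_nonneg zero_le_one fun s hs => ?_
  exact mul_nonneg (Real.rpow_nonneg (by linarith [hs.2]) _) (Real.rpow_nonneg hs.1 _)

lemma beta_scaled_eq {b c t : ℝ} (ht : 0 < t) :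
    (∫ τ in (0:ℝ)..t, (t - τ) ^ (b-1) * τ ^ (c-1)) = t ^ (b+c-1) * betaI b c := by
  have h := intervalIntegral.integral_comp_mul_left
    (a := 0) (b := 1) (fun τ => (t - τ) ^ (b-1) * τ ^ (c-1)) ht.ne'
  rw [mul_zero, mul_one, smul_eq_mul] at h
  have h2 : (∫ s in (0:ℝ)..1, (t - t * s) ^ (b-1) * (t * s) ^ (c-1))
      = ∫ s in (0:ℝ)..1, (t ^ (b-1) * t ^ (c-1)) * ((1 - s) ^ (b-1) * s ^ (c-1)) := by
    refine intervalIntegral.integral_congr_ae ?_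
    filter_upwards with s hs
    rw [Set.uIoc_of_le zero_le_one] at hs
    have h1s : (0:ℝ) ≤ 1 - s := by linarith [hs.2]
    rw [show t - t * s = t * (1 - s) by ring, Real.mul_rpow ht.le h1s,
      Real.mul_rpow ht.le hs.1.le]
    ring
  rw [h2, intervalIntegral.integral_const_mul] at h
  have ht' : (∫ τ in (0:ℝ)..t, (t - τ) ^ (b-1) * τ ^ (c-1))
      = t * (t ^ (b-1) * t ^ (c-1) * betaI b c) := by
    unfold betaI; rw [h]; field_simp
  rw [ht', show b + c - 1 = 1 + ((b-1) + (c-1)) by ring, Real.rpow_add ht,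
    Real.rpow_add ht, Real.rpow_one]
  ring

lemma betaI_mono {b c c' : ℝ} (hb : 0 < b) (hc : 0 < c) (hcc : c ≤ c') :
    betaI b c' ≤ betaI b c := by
  unfold betaI
  rw [intervalIntegral.integral_of_le zero_le_one, intervalIntegral.integral_of_le zero_le_one]
  refine setIntegral_mono_on
    ((intervalIntegrable_iff_integrableOn_Ioc_of_le zero_le_one).mp
      (intervalIntegrable_beta hb (by linarith)))
    ((intervalIntegrable_iff_integrableOn_Ioc_of_le zero_le_one).mp
      (intervalIntegrable_beta hb hc)) measurableSet_Ioc fun s hs => ?_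
  refine mul_le_mul_of_nonneg_left ?_ (Real.rpow_nonneg (by linarith [hs.2]) _)
  exact Real.rpow_le_rpow_of_exponent_ge hs.1 hs.2 (by linarith)

lemma betaI_le {b θ c : ℝ} (hb : 0 < b) (hθ0 : 0 < θ) (hθ1 : θ < 1) (hc : 1 ≤ c) :
    betaI b c ≤ (max ((1-θ) ^ (b-1)) 1) * (θ ^ c / c) + (1-θ) ^ b / b := by
  have hc0 : (0:ℝ) < c := by linarith
  have hI := intervalIntegrable_beta hb hc0
  have h1 : IntervalIntegrable (fun s => (1 - s) ^ (b-1) * s ^ (c-1)) volume 0 θ := by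
    refine hI.mono_set ?_
    rw [Set.uIcc_of_le hθ0.le, Set.uIcc_of_le zero_le_one]
    exact Set.Icc_subset_Icc le_rfl hθ1.le
  have h2 : IntervalIntegrable (fun s => (1 - s) ^ (b-1) * s ^ (c-1)) volume θ 1 := by
    refine hI.mono_set ?_
    rw [Set.uIcc_of_le hθ1.le, Set.uIcc_of_le zero_le_one]
    exact Set.Icc_subset_Icc hθ0.le le_rfl
  have hsplit : betaI b c = (∫ s in (0:ℝ)..θ, (1 - s) ^ (b-1) * s ^ (c-1))
      + ∫ s in θ..(1:ℝ), (1 - s) ^ (b-1) * s ^ (c-1) :=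
    (intervalIntegral.integral_add_adjacent_intervals h1 h2).symm
  set K := max ((1-θ) ^ (b-1)) 1 with hK
  have hK1 : (1:ℝ) ≤ K := le_max_right _ _
  have bound1 : (∫ s in (0:ℝ)..θ, (1 - s) ^ (b-1) * s ^ (c-1)) ≤ K * (θ ^ c / c) := by
    have hmaj : IntervalIntegrable (fun s : ℝ => K * s ^ (c-1)) volume 0 θ :=
      (intervalIntegrable_rpow' (by linarith)).const_mul K
    have hmono := intervalIntegral.integral_mono_on hθ0.le h1 hmaj (fun s hs => ?_)
    · calc (∫ s in (0:ℝ)..θ, (1 - s) ^ (b-1) * s ^ (c-1)) ≤ ∫ s in (0:ℝ)..θ, K * s ^ (c-1) := hmono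
        _ = K * ∫ s in (0:ℝ)..θ, s ^ (c-1) := intervalIntegral.integral_const_mul _ _
        _ = K * (θ ^ c / c) := by
            rw [integral_rpow (Or.inl (by linarith))]
            rw [show c - 1 + 1 = c by ring, Real.zero_rpow hc0.ne']
            ring
    · have h1s : 1 - θ ≤ 1 - s := by linarith [hs.2]
      have h1s0 : 0 < 1 - θ := by linarith
      refine mul_le_mul_of_nonneg_right ?_ (Real.rpow_nonneg hs.1 _)
      rcases le_or_gt (b-1) 0 with hb1 | hb1
      · exact le_trans (Real.rpow_le_rpow_of_nonpos h1s0 h1s hb1) (le_max_left _ _)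
      · exact le_trans (Real.rpow_le_one (by linarith [hs.1]) (by linarith [hs.1]) hb1.le)
          (le_max_right _ _)
  have bound2 : (∫ s in θ..(1:ℝ), (1 - s) ^ (b-1) * s ^ (c-1)) ≤ (1-θ) ^ b / b := by
    have hmaj : IntervalIntegrable (fun s : ℝ => (1 - s) ^ (b-1)) volume θ 1 := by
      have h0 : IntervalIntegrable (fun x : ℝ => x ^ (b-1)) volume (1-θ) 0 :=
        intervalIntegrable_rpow' (by linarith)
      have := h0.comp_sub_left 1
      rw [sub_zero, show (1:ℝ) - (1 - θ) = θ by ring] at this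
      exact this
    have hmono := intervalIntegral.integral_mono_on hθ1.le h2 hmaj (fun s hs => ?_)
    · calc (∫ s in θ..(1:ℝ), (1 - s) ^ (b-1) * s ^ (c-1)) ≤ ∫ s in θ..(1:ℝ), (1 - s) ^ (b-1) := hmono
        _ = ∫ x in (1-(1:ℝ))..(1-θ), x ^ (b-1) := by
            rw [← intervalIntegral.integral_comp_sub_left (fun x => x ^ (b-1)) 1]
        _ = (1-θ) ^ b / b := by
            rw [sub_self, integral_rpow (Or.inl (by linarith))]
            rw [show b - 1 + 1 = b by ring, Real.zero_rpow (by linarith : b ≠ 0)]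
            ring
    · nth_rewrite 2 [show (1 - s) ^ (b-1) = (1 - s) ^ (b-1) * 1 by ring]
      refine mul_le_mul_of_nonneg_left ?_ (Real.rpow_nonneg (by linarith [hs.2]) _)
      exact Real.rpow_le_one (by linarith [hs.1, hθ0]) hs.2 (by linarith)
  linarith [hsplit, bound1, bound2]

lemma betaI_eventually_le {b p ε : ℝ} (hb : 0 < b) (hp : 0 < p) (hε : 0 < ε) :
    ∀ᶠ n : ℕ in atTop, betaI b (((n:ℝ)+1)*p) ≤ ε := by
  set δ : ℝ := min (1/2) ((ε * b / 2) ^ (1/b)) with hδdef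
  have hδ0 : 0 < δ :=
    lt_min (by norm_num) (Real.rpow_pos_of_pos (by positivity) _)
  have hδ1 : δ < 1 := lt_of_le_of_lt (min_le_left _ _) (by norm_num)
  set θ : ℝ := 1 - δ with hθdef
  have hθ0 : 0 < θ := by simp only [hθdef]; linarith
  have hθ1 : θ < 1 := by simp only [hθdef]; linarith
  have hterm2 : (1-θ) ^ b / b ≤ ε / 2 := by
    have h1γ : (1:ℝ) - θ = δ := by simp [hθdef]
    have hδle : δ ≤ (ε * b / 2) ^ (1/b) := min_le_right _ _
    have : δ ^ b ≤ ((ε * b / 2) ^ (1/b)) ^ b := Real.rpow_le_rpow hδ0.le hδle hb.le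
    rw [one_div, Real.rpow_inv_rpow (by positivity) hb.ne'] at this
    rw [h1γ, div_le_iff₀ hb]
    linarith
  set K := max ((1-θ) ^ (b-1)) 1 with hKdef
  have hK0 : 0 < K := lt_of_lt_of_le one_pos (le_max_right _ _)
  have hρ0 : 0 ≤ θ ^ p := Real.rpow_nonneg hθ0.le _
  have hρ1 : θ ^ p < 1 := Real.rpow_lt_one hθ0.le hθ1 hp
  have hgeo : Tendsto (fun n : ℕ => K * (θ ^ p) ^ (n+1) / p) atTop (nhds 0) := by
    have h0 : Tendsto (fun n : ℕ => (θ ^ p) ^ n) atTop (nhds 0) :=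
      tendsto_pow_atTop_nhds_zero_of_lt_one hρ0 hρ1
    have h1 : Tendsto (fun n : ℕ => (θ ^ p) ^ (n+1)) atTop (nhds 0) :=
      h0.comp (tendsto_add_atTop_nat 1)
    have := (h1.const_mul K).div_const p
    simpa using this
  have hev1 : ∀ᶠ n : ℕ in atTop, K * (θ ^ p) ^ (n+1) / p < ε / 2 :=
    hgeo.eventually_lt_const (by positivity)
  have hev2 : ∀ᶠ n : ℕ in atTop, 1 ≤ ((n:ℝ)+1) * p := by
    filter_upwards [eventually_ge_atTop ⌈1/p⌉₊] with n hn
    have h1 : (1:ℝ)/p ≤ (n:ℝ) + 1 := by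
      calc (1:ℝ)/p ≤ (⌈1/p⌉₊ : ℝ) := Nat.le_ceil _
        _ ≤ (n:ℝ) := by exact_mod_cast hn
        _ ≤ (n:ℝ) + 1 := by linarith
    rw [div_le_iff₀ hp] at h1
    linarith
  filter_upwards [hev1, hev2] with n h1 h2
  have hc0 : 0 < ((n:ℝ)+1) * p := by positivity
  have hmain := betaI_le hb hθ0 hθ1 h2
  have hθc : θ ^ (((n:ℝ)+1)*p) = (θ ^ p) ^ (n+1) := by
    rw [show ((n:ℝ)+1)*p = p * ((n:ℝ)+1) by ring, Real.rpow_mul hθ0.le]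
    rw [show ((n:ℝ)+1) = ((n+1 : ℕ) : ℝ) by push_cast; ring, Real.rpow_natCast]
  have hple : ((n:ℝ)+1) * p ≥ p := by nlinarith [Nat.cast_nonneg (α := ℝ) n]
  have hdivle : θ ^ (((n:ℝ)+1)*p) / (((n:ℝ)+1)*p) ≤ (θ ^ p) ^ (n+1) / p := by
    rw [hθc]
    exact div_le_div_of_nonneg_left (by positivity) hp hple
  have : K * (θ ^ (((n:ℝ)+1)*p) / (((n:ℝ)+1)*p)) ≤ K * ((θ ^ p) ^ (n+1) / p) :=
    mul_le_mul_of_nonneg_left hdivle hK0.le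
  have h3 : K * ((θ ^ p) ^ (n+1) / p) = K * (θ ^ p) ^ (n+1) / p := by ring
  linarith [hmain, this, hterm2, h1, h3.le]


noncomputable def Dseq (p : ℝ) : ℕ → ℝ
  | 0 => 1
  | n+1 => Dseq p n * betaI p (((n:ℝ)+1)*p)

lemma Dseq_nonneg (p : ℝ) (n : ℕ) : 0 ≤ Dseq p n := by
  induction n with
  | zero => norm_num [Dseq]
  | succ n ih => exact mul_nonneg ih (betaI_nonneg _ _)

lemma ae_ne_vol (x : ℝ) : ∀ᵐ τ : ℝ, τ ≠ x := by
  rw [ae_iff]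
  have : {τ : ℝ | ¬ τ ≠ x} = {x} := by ext τ; simp
  rw [this]; exact measure_singleton x

lemma convNPow_repr {p : ℝ} {κ κ₁ : ℝ → ℝ} (hp : 0 < p) (hκ₁ : Continuous κ₁)
    (hκ : ∀ x : ℝ, 0 < x → κ x = x ^ (p-1) * κ₁ x) {T C : ℝ} (hT : 0 < T)
    (hC : ∀ s ∈ Icc (0:ℝ) T, |κ₁ s| ≤ C) (n : ℕ) :
    ∃ g : ℝ → ℝ, Continuous g ∧
      (∀ x : ℝ, 0 < x → convNPow κ n x = x ^ (((n:ℝ)+1)*p - 1) * g x) ∧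
      (∀ s ∈ Icc (0:ℝ) T, |g s| ≤ C^(n+1) * Dseq p n) := by
  have hC0 : 0 ≤ C := le_trans (abs_nonneg _) (hC 0 ⟨le_refl 0, hT.le⟩)
  induction n with
  | zero =>
    refine ⟨κ₁, hκ₁, fun x hx => ?_, fun s hs => ?_⟩
    · show κ x = _
      rw [hκ x hx]; norm_num
    · simpa [Dseq] using hC s hs
  | succ n ih =>
    obtain ⟨g, hgc, hgr, hgb⟩ := ih
    set β : ℝ := ((n:ℝ)+1)*p with hβ
    have hβ0 : 0 < β := by positivity
    set G : ℝ → ℝ :=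
      fun x => ∫ s in Ioo (0:ℝ) 1, (1-s)^(p-1) * s^(β-1) * (κ₁ (x*(1-s)) * g (x*s)) with hG
    have hbase : IntegrableOn (fun s : ℝ => (1-s)^(p-1) * s^(β-1)) (Ioo 0 1) volume :=
      ((intervalIntegrable_iff_integrableOn_Ioc_of_le zero_le_one).mp
        (intervalIntegrable_beta hp hβ0)).mono_set Ioo_subset_Ioc_self
    have hbasenn : ∀ s : ℝ, s ∈ Ioo (0:ℝ) 1 → 0 ≤ (1-s)^(p-1) * s^(β-1) := fun s hs =>
      mul_nonneg (Real.rpow_nonneg (by linarith [hs.2]) _) (Real.rpow_nonneg hs.1.le _)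
    have hmeasF : ∀ x : ℝ,
        Measurable fun s : ℝ => (1-s)^(p-1) * s^(β-1) * (κ₁ (x*(1-s)) * g (x*s)) := by
      intro x
      exact (((measurable_rpow_const' _).comp (measurable_const.sub measurable_id)).mul
        (measurable_rpow_const' _)).mul
        (((hκ₁.comp (continuous_const.mul (continuous_const.sub continuous_id))).measurable).mul
          ((hgc.comp (continuous_const.mul continuous_id)).measurable))
    have hGc : Continuous G := by
      rw [continuous_iff_continuousAt]; intro x₀
      set R : ℝ := |x₀| + 1 with hR
      obtain ⟨C₁, hC₁⟩ :=
        (isCompact_Icc (a := -R) (b := R)).exists_bound_of_continuousOn hκ₁.continuousOn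
      obtain ⟨C₂, hC₂⟩ :=
        (isCompact_Icc (a := -R) (b := R)).exists_bound_of_continuousOn hgc.continuousOn
      set C₁' : ℝ := max C₁ 0 with hC₁'
      set C₂' : ℝ := max C₂ 0 with hC₂'
      refine MeasureTheory.continuousAt_of_dominated
        (bound := fun s => ((1-s)^(p-1) * s^(β-1)) * (C₁' * C₂')) ?_ ?_ ?_ ?_
      · exact Eventually.of_forall fun x => (hmeasF x).aestronglyMeasurable
      · filter_upwards [Metric.ball_mem_nhds x₀ one_pos] with x hx
        filter_upwards [ae_restrict_mem measurableSet_Ioo] with s hs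
        have hxR : |x| ≤ R := by
          have hd : |x - x₀| < 1 := by
            have := mem_ball_iff_norm.mp hx; rwa [Real.norm_eq_abs] at this
          calc |x| = |x₀ + (x - x₀)| := by ring_nf
            _ ≤ |x₀| + |x - x₀| := abs_add_le _ _
            _ ≤ R := by rw [hR]; linarith
        have hmem1 : x*(1-s) ∈ Icc (-R) R := by
          rw [mem_Icc, ← abs_le, abs_mul]
          calc |x| * |1-s| ≤ R * 1 := by
                refine mul_le_mul hxR ?_ (abs_nonneg _) (by positivity)
                rw [abs_of_nonneg (by linarith [hs.2] : (0:ℝ) ≤ 1-s)]; linarith [hs.1]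
            _ = R := mul_one R
        have hmem2 : x*s ∈ Icc (-R) R := by
          rw [mem_Icc, ← abs_le, abs_mul]
          calc |x| * |s| ≤ R * 1 := by
                refine mul_le_mul hxR ?_ (abs_nonneg _) (by positivity)
                rw [abs_of_nonneg hs.1.le]; linarith [hs.2]
            _ = R := mul_one R
        rw [norm_mul]
        refine mul_le_mul (le_of_eq ?_) ?_ (norm_nonneg _) (hbasenn s hs)
        · rw [Real.norm_eq_abs, abs_of_nonneg (hbasenn s hs)]
        · rw [norm_mul]
          exact mul_le_mul (le_trans (hC₁ _ hmem1) (le_max_left _ _))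
            (le_trans (hC₂ _ hmem2) (le_max_left _ _)) (norm_nonneg _) (le_max_right _ _)
      · exact hbase.mul_const _
      · refine ae_of_all _ fun s => ?_
        exact (continuous_const.mul
          ((hκ₁.comp (continuous_id.mul continuous_const)).mul
            (hgc.comp (continuous_id.mul continuous_const)))).continuousAt
    have hIoo : (∫ s in Ioo (0:ℝ) 1, (1-s)^(p-1) * s^(β-1)) = betaI p β := by
      unfold betaI
      rw [intervalIntegral.integral_of_le zero_le_one,
        MeasureTheory.integral_Ioc_eq_integral_Ioo]
    refine ⟨G, hGc, ?_, ?_⟩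
    · -- representation
      intro x hx
      set Φ : ℝ → ℝ := fun τ => (x-τ)^(p-1) * κ₁ (x-τ) * (τ^(β-1) * g τ) with hΦ
      have step1 : convNPow κ (n+1) x = ∫ τ in (0:ℝ)..x, Φ τ := by
        show (∫ τ in (0:ℝ)..x, κ (x - τ) * convNPow κ n τ) = _
        refine intervalIntegral.integral_congr_ae ?_
        filter_upwards [ae_ne_vol x] with τ hτ hmem
        rw [Set.uIoc_of_le hx.le] at hmem
        have h0τ : 0 < τ := hmem.1
        have hτx : τ < x := lt_of_le_of_ne hmem.2 hτ
        rw [hκ _ (by linarith : 0 < x - τ), hgr τ h0τ]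
      have hs2 := intervalIntegral.integral_comp_mul_left (a := 0) (b := 1) Φ hx.ne'
      rw [mul_zero, mul_one, smul_eq_mul] at hs2
      have hs3 : (∫ s in (0:ℝ)..1, Φ (x * s)) = x^(p-1) * x^(β-1) * G x := by
        have hcong : (∫ s in (0:ℝ)..1, Φ (x*s)) = ∫ s in (0:ℝ)..1,
            (x^(p-1) * x^(β-1)) * ((1-s)^(p-1) * s^(β-1) * (κ₁ (x*(1-s)) * g (x*s))) := by
          refine intervalIntegral.integral_congr_ae ?_
          filter_upwards with s hs
          rw [Set.uIoc_of_le zero_le_one] at hs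
          show (x - x*s)^(p-1) * κ₁ (x - x*s) * ((x*s)^(β-1) * g (x*s)) = _
          rw [show x - x*s = x*(1-s) by ring, Real.mul_rpow hx.le (by linarith [hs.2]),
            Real.mul_rpow hx.le hs.1.le]
          ring
        rw [hcong, intervalIntegral.integral_const_mul]
        congr 1
        rw [intervalIntegral.integral_of_le zero_le_one,
          MeasureTheory.integral_Ioc_eq_integral_Ioo]
      have hI : (∫ τ in (0:ℝ)..x, Φ τ) = x * ∫ s in (0:ℝ)..1, Φ (x*s) := by
        rw [hs2]; field_simp
      rw [step1, hI, hs3]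
      push_cast
      rw [show ((n:ℝ) + 1 + 1)*p - 1 = 1 + ((p-1) + (β-1)) by rw [hβ]; ring,
        Real.rpow_add hx, Real.rpow_add hx, Real.rpow_one]
      ring
    · -- bound
      intro x hx
      have hDn : 0 ≤ Dseq p n := Dseq_nonneg p n
      have hgB : 0 ≤ C^(n+1) * Dseq p n := mul_nonneg (pow_nonneg hC0 _) hDn
      have hbd : |G x| ≤ (∫ s in Ioo (0:ℝ) 1, ((1-s)^(p-1) * s^(β-1)) * (C * (C^(n+1) * Dseq p n))) := by
        rw [← Real.norm_eq_abs]
        refine MeasureTheory.norm_integral_le_of_norm_le (hbase.mul_const _) ?_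
        filter_upwards [ae_restrict_mem measurableSet_Ioo] with s hs
        have hmem1 : x*(1-s) ∈ Icc (0:ℝ) T := by
          constructor
          · exact mul_nonneg hx.1 (by linarith [hs.2])
          · calc x*(1-s) ≤ x*1 := by
                  refine mul_le_mul_of_nonneg_left (by linarith [hs.1]) hx.1
              _ ≤ T := by rw [mul_one]; exact hx.2
        have hmem2 : x*s ∈ Icc (0:ℝ) T := by
          constructor
          · exact mul_nonneg hx.1 hs.1.le
          · calc x*s ≤ x*1 := mul_le_mul_of_nonneg_left (by linarith [hs.2]) hx.1
              _ ≤ T := by rw [mul_one]; exact hx.2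
        rw [norm_mul]
        refine mul_le_mul (le_of_eq ?_) ?_ (norm_nonneg _) (hbasenn s hs)
        · rw [Real.norm_eq_abs, abs_of_nonneg (hbasenn s hs)]
        · rw [norm_mul, Real.norm_eq_abs, Real.norm_eq_abs]
          exact mul_le_mul (hC _ hmem1) (hgb _ hmem2) (abs_nonneg _) hC0
      rw [MeasureTheory.integral_mul_const, hIoo] at hbd
      calc |G x| ≤ betaI p β * (C * (C^(n+1) * Dseq p n)) := hbd
        _ = C^(n+1+1) * Dseq p (n+1) := by
            show _ = C^(n+1+1) * (Dseq p n * betaI p (((n:ℝ)+1)*p))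
            rw [← hβ, pow_succ]
            ring

lemma exists_w_bound {p r C t : ℝ} (hp : 0 < p) (hr : 0 < r) (hC : 0 < C) (ht : 0 < t) :
    ∃ W : ℝ, 0 < W ∧ ∀ n : ℕ, C^(n+1) * Dseq p n * t^(((n:ℝ)+1)*p) / r^n ≤ W := by
  set w : ℕ → ℝ := fun n => C^(n+1) * Dseq p n * t^(((n:ℝ)+1)*p) / r^n with hw
  have hwnn : ∀ n, 0 ≤ w n := by
    intro n
    exact div_nonneg (mul_nonneg (mul_nonneg (pow_nonneg hC.le _) (Dseq_nonneg p n))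
      (Real.rpow_nonneg ht.le _)) (pow_nonneg hr.le n)
  have hrec : ∀ n, w (n+1) = w n * (C * t^p * betaI p (((n:ℝ)+1)*p) / r) := by
    intro n
    show C^(n+1+1) * (Dseq p n * betaI p (((n:ℝ)+1)*p)) * t^((↑(n+1)+1)*p) / r^(n+1) = _
    rw [show ((↑(n+1):ℝ)+1)*p = ((n:ℝ)+1)*p + p by push_cast; ring, Real.rpow_add ht,
      pow_succ C (n+1), pow_succ r n, div_mul_div_comm]
    ring
  have hev : ∀ᶠ n : ℕ in atTop, betaI p (((n:ℝ)+1)*p) ≤ r / (2 * C * t^p) :=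
    betaI_eventually_le hp hp (by positivity)
  have hsum : Summable w := by
    refine summable_of_ratio_norm_eventually_le (r := 1/2) (by norm_num) ?_
    filter_upwards [hev] with n hn
    rw [Real.norm_eq_abs, Real.norm_eq_abs, abs_of_nonneg (hwnn _), abs_of_nonneg (hwnn _),
      hrec]
    have hfac : C * t^p * betaI p (((n:ℝ)+1)*p) / r ≤ 1/2 := by
      rw [div_le_iff₀ hr]
      calc C * t^p * betaI p (((n:ℝ)+1)*p) ≤ C * t^p * (r/(2*C*t^p)) :=
            mul_le_mul_of_nonneg_left hn (by positivity)
        _ = 1/2 * r := by field_simp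
    calc w n * (C * t^p * betaI p (((n:ℝ)+1)*p) / r) ≤ w n * (1/2) :=
          mul_le_mul_of_nonneg_left hfac (hwnn n)
      _ = 1/2 * w n := by ring
  obtain ⟨W0, hW0⟩ := hsum.tendsto_atTop_zero.bddAbove_range
  exact ⟨max W0 1, lt_of_lt_of_le one_pos (le_max_right _ _),
    fun n => le_trans (hW0 (Set.mem_range_self n)) (le_max_left _ _)⟩


lemma lconv_sonine {p q β : ℝ} {κ k κ₁ k₁ f g : ℝ → ℝ}
    (hp : 0 < p) (hq : 0 < q) (hβ : 0 < β)
    (hκ₁ : Continuous κ₁) (hk₁ : Continuous k₁) (hgc : Continuous g)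
    (hκ : ∀ x : ℝ, 0 < x → κ x = x^(p-1) * κ₁ x)
    (hk : ∀ x : ℝ, 0 < x → k x = x^(q-1) * k₁ x)
    (hf : ∀ x : ℝ, 0 < x → f x = x^(β-1) * g x)
    (hson : ∀ x : ℝ, 0 < x → lconv κ k x = 1)
    {t : ℝ} (ht : 0 < t) :
    lconv k (lconv κ f) t = ∫ τ in (0:ℝ)..t, f τ := by
  obtain ⟨Cκ, hCκ0⟩ :=
    (isCompact_Icc (a := (0:ℝ)) (b := t)).exists_bound_of_continuousOn hκ₁.continuousOn
  obtain ⟨Ck, hCk0⟩ :=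
    (isCompact_Icc (a := (0:ℝ)) (b := t)).exists_bound_of_continuousOn hk₁.continuousOn
  obtain ⟨Cg, hCg0⟩ :=
    (isCompact_Icc (a := (0:ℝ)) (b := t)).exists_bound_of_continuousOn hgc.continuousOn
  set Cκ' : ℝ := max Cκ 0 with hCκ'
  set Ck' : ℝ := max Ck 0 with hCk'
  set Cg' : ℝ := max Cg 0 with hCg'
  have hCκ : ∀ s ∈ Icc (0:ℝ) t, |κ₁ s| ≤ Cκ' := fun s hs =>
    le_trans (hCκ0 s hs) (le_max_left _ _)
  have hCk : ∀ s ∈ Icc (0:ℝ) t, |k₁ s| ≤ Ck' := fun s hs =>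
    le_trans (hCk0 s hs) (le_max_left _ _)
  have hCg : ∀ s ∈ Icc (0:ℝ) t, |g s| ≤ Cg' := fun s hs =>
    le_trans (hCg0 s hs) (le_max_left _ _)
  have hCκ'0 : 0 ≤ Cκ' := le_max_right _ _
  have hCk'0 : 0 ≤ Ck' := le_max_right _ _
  have hCg'0 : 0 ≤ Cg' := le_max_right _ _
  set inner : ℝ → ℝ → ℝ := fun τ σ =>
    ((t-τ)^(q-1) * k₁ (t-τ)) * (((τ-σ)^(p-1) * κ₁ (τ-σ)) * (σ^(β-1) * g σ)) with hinner
  set Wf : ℝ → ℝ → ℝ := fun τ σ =>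
    if 0 < σ ∧ σ < τ ∧ τ < t then inner τ σ else 0 with hWf
  -- measurability
  have hWmeas : Measurable (uncurry Wf) := by
    have hS : MeasurableSet {z : ℝ × ℝ | 0 < z.2 ∧ z.2 < z.1 ∧ z.1 < t} :=
      ((measurableSet_lt measurable_const measurable_snd).inter
        ((measurableSet_lt measurable_snd measurable_fst).inter
          (measurableSet_lt measurable_fst measurable_const)))
    have hbr : Measurable (fun z : ℝ × ℝ => inner z.1 z.2) := by
      refine Measurable.mul (Measurable.mul ?_ ?_) (Measurable.mul (Measurable.mul ?_ ?_)
        (Measurable.mul ?_ ?_))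
      · exact (measurable_rpow_const' _).comp (measurable_const.sub measurable_fst)
      · exact hk₁.measurable.comp (measurable_const.sub measurable_fst)
      · exact (measurable_rpow_const' _).comp (measurable_fst.sub measurable_snd)
      · exact hκ₁.measurable.comp (measurable_fst.sub measurable_snd)
      · exact (measurable_rpow_const' _).comp measurable_snd
      · exact hgc.measurable.comp measurable_snd
    have : uncurry Wf = fun z : ℝ × ℝ =>
        if 0 < z.2 ∧ z.2 < z.1 ∧ z.1 < t then inner z.1 z.2 else 0 := rfl
    rw [this]
    exact Measurable.ite hS hbr measurable_const
  have hslice0 : ∀ τ : ℝ, ¬(0 < τ ∧ τ < t) → ∀ σ, Wf τ σ = 0 := by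
    intro τ hτ σ
    exact if_neg (fun h => hτ ⟨lt_trans h.1 h.2.1, h.2.2⟩)
  have hslice : ∀ τ : ℝ, 0 < τ → τ < t →
      (fun σ => Wf τ σ) = (Ioo (0:ℝ) τ).indicator (fun σ => inner τ σ) := by
    intro τ hτ0 hτt
    funext σ
    by_cases hσ : 0 < σ ∧ σ < τ
    · rw [show Wf τ σ = inner τ σ from if_pos ⟨hσ.1, hσ.2, hτt⟩,
        Set.indicator_of_mem (mem_Ioo.mpr hσ)]
    · rw [show Wf τ σ = 0 from if_neg (by tauto),
        Set.indicator_of_notMem (by simpa [mem_Ioo] using hσ)]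
  -- integrability of slices
  have hinner_meas : ∀ τ : ℝ, Measurable (fun σ => inner τ σ) := by
    intro τ
    refine Measurable.mul measurable_const (Measurable.mul (Measurable.mul ?_ ?_)
      (Measurable.mul ?_ ?_))
    · exact (measurable_rpow_const' _).comp (measurable_const.sub measurable_id)
    · exact hκ₁.measurable.comp (measurable_const.sub measurable_id)
    · exact measurable_rpow_const' _
    · exact hgc.measurable.comp measurable_id
  have hinner_bound : ∀ τ : ℝ, 0 < τ → τ < t → ∀ σ ∈ Ioo (0:ℝ) τ,
      ‖inner τ σ‖ ≤ (|(t-τ)^(q-1) * k₁ (t-τ)| * (Cκ' * Cg')) * ((τ-σ)^(p-1) * σ^(β-1)) := by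
    intro τ hτ0 hτt σ hσ
    have hτσ0 : (0:ℝ) ≤ τ - σ := by linarith [hσ.2]
    have hmem1 : τ - σ ∈ Icc (0:ℝ) t := ⟨hτσ0, by linarith [hσ.1]⟩
    have hmem2 : σ ∈ Icc (0:ℝ) t := ⟨hσ.1.le, by linarith [hσ.2]⟩
    have e1 : ‖inner τ σ‖ = |(t-τ)^(q-1) * k₁ (t-τ)| *
        (((τ-σ)^(p-1) * |κ₁ (τ-σ)|) * (σ^(β-1) * |g σ|)) := by
      rw [Real.norm_eq_abs]
      show |((t-τ)^(q-1) * k₁ (t-τ)) * (((τ-σ)^(p-1) * κ₁ (τ-σ)) * (σ^(β-1) * g σ))| = _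
      rw [abs_mul ((t-τ)^(q-1) * k₁ (t-τ)), abs_mul ((τ-σ)^(p-1) * κ₁ (τ-σ)),
        abs_mul ((τ-σ)^(p-1)), abs_mul (σ^(β-1)),
        abs_of_nonneg (Real.rpow_nonneg hτσ0 (p-1)), abs_of_nonneg (Real.rpow_nonneg hσ.1.le (β-1))]
    rw [e1]
    have h_a : (τ-σ)^(p-1) * |κ₁ (τ-σ)| ≤ (τ-σ)^(p-1) * Cκ' :=
      mul_le_mul_of_nonneg_left (hCκ _ hmem1) (Real.rpow_nonneg hτσ0 _)
    have h_b : σ^(β-1) * |g σ| ≤ σ^(β-1) * Cg' :=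
      mul_le_mul_of_nonneg_left (hCg _ hmem2) (Real.rpow_nonneg hσ.1.le _)
    have h_ab : ((τ-σ)^(p-1) * |κ₁ (τ-σ)|) * (σ^(β-1) * |g σ|)
        ≤ ((τ-σ)^(p-1) * Cκ') * (σ^(β-1) * Cg') :=
      mul_le_mul h_a h_b (mul_nonneg (Real.rpow_nonneg hσ.1.le _) (abs_nonneg _))
        (mul_nonneg (Real.rpow_nonneg hτσ0 _) hCκ'0)
    calc |(t-τ)^(q-1) * k₁ (t-τ)| * (((τ-σ)^(p-1) * |κ₁ (τ-σ)|) * (σ^(β-1) * |g σ|))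
        ≤ |(t-τ)^(q-1) * k₁ (t-τ)| * (((τ-σ)^(p-1) * Cκ') * (σ^(β-1) * Cg')) :=
          mul_le_mul_of_nonneg_left h_ab (abs_nonneg _)
      _ = (|(t-τ)^(q-1) * k₁ (t-τ)| * (Cκ' * Cg')) * ((τ-σ)^(p-1) * σ^(β-1)) := by ring
  have hmajτ : ∀ τ : ℝ, 0 < τ → τ < t →
      IntegrableOn (fun σ => (|(t-τ)^(q-1) * k₁ (t-τ)| * (Cκ' * Cg')) *
        ((τ-σ)^(p-1) * σ^(β-1))) (Ioo 0 τ) volume := by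
    intro τ hτ0 hτt
    exact ((intervalIntegrable_iff_integrableOn_Ioc_of_le hτ0.le).mp
      ((intervalIntegrable_beta_scaled hp hβ hτ0).const_mul _)).mono_set Ioo_subset_Ioc_self
  have hinner_int : ∀ τ : ℝ, 0 < τ → τ < t →
      IntegrableOn (fun σ => inner τ σ) (Ioo 0 τ) volume := by
    intro τ hτ0 hτt
    refine (hmajτ τ hτ0 hτt).mono' (hinner_meas τ).aestronglyMeasurable ?_
    filter_upwards [ae_restrict_mem measurableSet_Ioo] with σ hσ
    exact hinner_bound τ hτ0 hτt σ hσ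
  have hsliceint : ∀ τ : ℝ, Integrable (fun σ => Wf τ σ) volume := by
    intro τ
    by_cases hτ : 0 < τ ∧ τ < t
    · rw [hslice τ hτ.1 hτ.2]
      exact (integrable_indicator_iff measurableSet_Ioo).mpr (hinner_int τ hτ.1 hτ.2)
    · have h0 : (fun σ => Wf τ σ) = fun _ => 0 := funext (hslice0 τ hτ)
      rw [h0]; exact integrable_zero _ _ _
  -- norm integral bound in τ
  set BIG : ℝ := Ck' * (Cκ' * Cg') * betaI p β with hBIG
  have hnormint : ∀ τ : ℝ, 0 < τ → τ < t →
      (∫ σ, ‖Wf τ σ‖) ≤ BIG * ((t-τ)^(q-1) * τ^((p+β)-1)) := by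
    intro τ hτ0 hτt
    have h1 : (∫ σ, ‖Wf τ σ‖) = ∫ σ in Ioo (0:ℝ) τ, ‖inner τ σ‖ := by
      have hp1 : ∀ σ, ‖Wf τ σ‖ = (Ioo (0:ℝ) τ).indicator (fun σ => ‖inner τ σ‖) σ := by
        intro σ
        rw [congrFun (hslice τ hτ0 hτt) σ]
        exact norm_indicator_eq_indicator_norm _ _
      calc (∫ σ, ‖Wf τ σ‖) = ∫ σ, (Ioo (0:ℝ) τ).indicator (fun σ => ‖inner τ σ‖) σ := by
            exact integral_congr_ae (Eventually.of_forall hp1)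
        _ = ∫ σ in Ioo (0:ℝ) τ, ‖inner τ σ‖ := integral_indicator measurableSet_Ioo
    rw [h1]
    have h2 : (∫ σ in Ioo (0:ℝ) τ, ‖inner τ σ‖)
        ≤ ∫ σ in Ioo (0:ℝ) τ, (|(t-τ)^(q-1) * k₁ (t-τ)| * (Cκ' * Cg')) *
            ((τ-σ)^(p-1) * σ^(β-1)) := by
      refine integral_mono_ae ((hinner_int τ hτ0 hτt).norm) (hmajτ τ hτ0 hτt) ?_
      filter_upwards [ae_restrict_mem measurableSet_Ioo] with σ hσ
      exact hinner_bound τ hτ0 hτt σ hσ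
    have h3 : (∫ σ in Ioo (0:ℝ) τ, (|(t-τ)^(q-1) * k₁ (t-τ)| * (Cκ' * Cg')) *
        ((τ-σ)^(p-1) * σ^(β-1)))
        = (|(t-τ)^(q-1) * k₁ (t-τ)| * (Cκ' * Cg')) * (τ^((p+β)-1) * betaI p β) := by
      rw [MeasureTheory.integral_const_mul, ← MeasureTheory.integral_Ioc_eq_integral_Ioo,
        ← intervalIntegral.integral_of_le hτ0.le, beta_scaled_eq hτ0]
    have h4 : |(t-τ)^(q-1) * k₁ (t-τ)| ≤ (t-τ)^(q-1) * Ck' := by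
      rw [abs_mul, abs_of_nonneg (Real.rpow_nonneg (by linarith : (0:ℝ) ≤ t - τ) _)]
      exact mul_le_mul_of_nonneg_left (hCk _ ⟨by linarith, by linarith⟩)
        (Real.rpow_nonneg (by linarith) _)
    have h5 : (|(t-τ)^(q-1) * k₁ (t-τ)| * (Cκ' * Cg')) * (τ^((p+β)-1) * betaI p β)
        ≤ ((t-τ)^(q-1) * Ck' * (Cκ' * Cg')) * (τ^((p+β)-1) * betaI p β) := by
      refine mul_le_mul_of_nonneg_right (mul_le_mul_of_nonneg_right h4 ?_) ?_
      · exact mul_nonneg hCκ'0 hCg'0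
      · exact mul_nonneg (Real.rpow_nonneg hτ0.le _) (betaI_nonneg p β)
    calc (∫ σ in Ioo (0:ℝ) τ, ‖inner τ σ‖) ≤ _ := h2
      _ = _ := h3
      _ ≤ ((t-τ)^(q-1) * Ck' * (Cκ' * Cg')) * (τ^((p+β)-1) * betaI p β) := h5
      _ = BIG * ((t-τ)^(q-1) * τ^((p+β)-1)) := by rw [hBIG]; ring
  -- product integrability
  have hmajglob : Integrable ((Ioo (0:ℝ) t).indicator
      (fun τ => BIG * ((t-τ)^(q-1) * τ^((p+β)-1)))) volume := by
    refine (integrable_indicator_iff measurableSet_Ioo).mpr ?_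
    exact ((intervalIntegrable_iff_integrableOn_Ioc_of_le ht.le).mp
      ((intervalIntegrable_beta_scaled hq (by positivity) ht).const_mul BIG)).mono_set
      Ioo_subset_Ioc_self
  have hBIG0 : 0 ≤ BIG :=
    mul_nonneg (mul_nonneg hCk'0 (mul_nonneg hCκ'0 hCg'0)) (betaI_nonneg p β)
  have hprod : Integrable (uncurry Wf) ((volume : Measure ℝ).prod volume) := by
    refine (integrable_prod_iff hWmeas.aestronglyMeasurable).mpr
      ⟨Eventually.of_forall (fun τ => ?_), ?_⟩
    · exact hsliceint τ
    · refine Integrable.mono' hmajglob (hWmeas.aestronglyMeasurable.norm.integral_prod_right')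
        (Eventually.of_forall fun τ => ?_)
      by_cases hτ : 0 < τ ∧ τ < t
      · rw [Set.indicator_of_mem (mem_Ioo.mpr hτ)]
        rw [Real.norm_eq_abs, abs_of_nonneg (integral_nonneg (fun σ => norm_nonneg _))]
        exact hnormint τ hτ.1 hτ.2
      · rw [Set.indicator_of_notMem (by simpa [mem_Ioo] using hτ)]
        have h0 : ∀ σ, ‖uncurry Wf (τ, σ)‖ = 0 := fun σ => by
          rw [show uncurry Wf (τ, σ) = Wf τ σ from rfl, hslice0 τ hτ σ, norm_zero]
        have h1 : (∫ σ, ‖uncurry Wf (τ, σ)‖) = 0 := by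
          rw [integral_congr_ae (Eventually.of_forall h0)]; simp
        rw [Real.norm_eq_abs, h1, abs_zero]
  -- E1 : LHS equals iterated integral
  have hτeq : ∀ τ : ℝ, (∫ σ, Wf τ σ)
      = (Ioo (0:ℝ) t).indicator (fun τ => k (t-τ) * lconv κ f τ) τ := by
    intro τ
    by_cases hτ : 0 < τ ∧ τ < t
    · rw [Set.indicator_of_mem (mem_Ioo.mpr hτ)]
      rw [show (∫ σ, Wf τ σ) = ∫ σ, (Ioo (0:ℝ) τ).indicator (fun σ => inner τ σ) σ from by
        rw [← hslice τ hτ.1 hτ.2]]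
      rw [MeasureTheory.integral_indicator measurableSet_Ioo]
      have hpull : (∫ σ in Ioo (0:ℝ) τ, inner τ σ)
          = ((t-τ)^(q-1) * k₁ (t-τ)) *
            ∫ σ in Ioo (0:ℝ) τ, ((τ-σ)^(p-1) * κ₁ (τ-σ)) * (σ^(β-1) * g σ) :=
        MeasureTheory.integral_const_mul _ _
      rw [hpull]
      have hc : (t-τ)^(q-1) * k₁ (t-τ) = k (t-τ) := (hk _ (by linarith [hτ.2])).symm
      rw [hc]
      congr 1
      rw [← MeasureTheory.integral_Ioc_eq_integral_Ioo,
        ← intervalIntegral.integral_of_le hτ.1.le]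
      show _ = ∫ σ in (0:ℝ)..τ, κ (τ - σ) * f σ
      refine intervalIntegral.integral_congr_ae ?_
      filter_upwards [ae_ne_vol τ] with σ hσ hmem
      rw [Set.uIoc_of_le hτ.1.le] at hmem
      have hστ : σ < τ := lt_of_le_of_ne hmem.2 hσ
      rw [hκ _ (by linarith : 0 < τ - σ), hf _ hmem.1]
    · rw [Set.indicator_of_notMem (by simpa [mem_Ioo] using hτ)]
      rw [show (fun σ => Wf τ σ) = fun _ => 0 from funext (hslice0 τ hτ)]
      simp
  have hE1 : lconv k (lconv κ f) t = ∫ τ, (∫ σ, Wf τ σ) := by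
    calc lconv k (lconv κ f) t = ∫ τ in Ioc (0:ℝ) t, k (t-τ) * lconv κ f τ :=
          intervalIntegral.integral_of_le ht.le
      _ = ∫ τ in Ioo (0:ℝ) t, k (t-τ) * lconv κ f τ :=
          MeasureTheory.integral_Ioc_eq_integral_Ioo
      _ = ∫ τ, (Ioo (0:ℝ) t).indicator (fun τ => k (t-τ) * lconv κ f τ) τ :=
          (MeasureTheory.integral_indicator measurableSet_Ioo).symm
      _ = ∫ τ, (∫ σ, Wf τ σ) :=
          integral_congr_ae (Eventually.of_forall fun τ => (hτeq τ).symm)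
  -- E2 : swap
  have hE2 : (∫ τ, (∫ σ, Wf τ σ)) = ∫ σ, (∫ τ, Wf τ σ) :=
    MeasureTheory.integral_integral_swap hprod
  -- E3 : inner integral after swap
  have hσeq : ∀ σ : ℝ, (∫ τ, Wf τ σ) = (Ioo (0:ℝ) t).indicator f σ := by
    intro σ
    by_cases hσ : 0 < σ ∧ σ < t
    · rw [Set.indicator_of_mem (mem_Ioo.mpr hσ)]
      have hsliceτ : (fun τ => Wf τ σ) = (Ioo σ t).indicator
          (fun τ => ((t-τ)^(q-1) * k₁ (t-τ) * ((τ-σ)^(p-1) * κ₁ (τ-σ))) * (σ^(β-1) * g σ)) := by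
        funext τ
        by_cases hτ : σ < τ ∧ τ < t
        · rw [show Wf τ σ = inner τ σ from if_pos ⟨hσ.1, hτ.1, hτ.2⟩,
            Set.indicator_of_mem (mem_Ioo.mpr hτ)]
          show ((t-τ)^(q-1) * k₁ (t-τ)) * (((τ-σ)^(p-1) * κ₁ (τ-σ)) * (σ^(β-1) * g σ)) = _
          ring
        · rw [show Wf τ σ = 0 from if_neg (by tauto),
            Set.indicator_of_notMem (by simpa [mem_Ioo] using hτ)]
      rw [hsliceτ, MeasureTheory.integral_indicator measurableSet_Ioo, MeasureTheory.integral_mul_const]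
      have hinner2 : (∫ τ in Ioo σ t, (t-τ)^(q-1) * k₁ (t-τ) * ((τ-σ)^(p-1) * κ₁ (τ-σ))) = 1 := by
        rw [← MeasureTheory.integral_Ioc_eq_integral_Ioo,
          ← intervalIntegral.integral_of_le hσ.2.le]
        have hcong : (∫ τ in σ..t, (t-τ)^(q-1) * k₁ (t-τ) * ((τ-σ)^(p-1) * κ₁ (τ-σ)))
            = ∫ τ in σ..t, (fun u => k (t - σ - u) * κ u) (τ - σ) := by
          refine intervalIntegral.integral_congr_ae ?_
          filter_upwards [ae_ne_vol t] with τ hτ hmem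
          rw [Set.uIoc_of_le hσ.2.le] at hmem
          have hτt : τ < t := lt_of_le_of_ne hmem.2 hτ
          have hστ : σ < τ := hmem.1
          show _ = k (t - σ - (τ - σ)) * κ (τ - σ)
          rw [show t - σ - (τ - σ) = t - τ by ring, hk _ (by linarith : 0 < t - τ),
            hκ _ (by linarith : 0 < τ - σ)]
        rw [hcong, intervalIntegral.integral_comp_sub_right (fun u => k (t - σ - u) * κ u) σ,
          sub_self]
        show lconv k κ (t - σ) = 1
        rw [lconv_comm]
        exact hson _ (by linarith [hσ.2])
      rw [hinner2, one_mul, hf σ hσ.1]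
    · rw [Set.indicator_of_notMem (by simpa [mem_Ioo] using hσ)]
      have h0 : (fun τ => Wf τ σ) = fun _ => 0 :=
        funext fun τ => if_neg (fun h => hσ ⟨h.1, lt_trans h.2.1 h.2.2⟩)
      rw [h0]; simp
  have hE3 : (∫ σ, (∫ τ, Wf τ σ)) = ∫ τ in (0:ℝ)..t, f τ := by
    calc (∫ σ, (∫ τ, Wf τ σ)) = ∫ σ, (Ioo (0:ℝ) t).indicator f σ :=
          integral_congr_ae (Eventually.of_forall hσeq)
      _ = ∫ σ in Ioo (0:ℝ) t, f σ := integral_indicator measurableSet_Ioo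
      _ = ∫ σ in Ioc (0:ℝ) t, f σ := MeasureTheory.integral_Ioc_eq_integral_Ioo.symm
      _ = ∫ τ in (0:ℝ)..t, f τ := (intervalIntegral.integral_of_le ht.le).symm
  rw [hE1, hE2, hE3]

set_option maxHeartbeats 2000000 in
/-- the action of the GFI with kernel `k` on a convolution series generated by the
associated Sonine kernel `κ`. -/
theorem gfi_of_convolution_series
    (κ k : ℝ → ℝ) (h : SoninePairL1 κ k) (a : ℕ → ℝ) (ha : PosRadius a) :
    ∀ t, 0 < t →
      lconv k (fun s => ∑' j, a j * convNPow κ j s) t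
        = a 0 + ∫ τ in (0:ℝ)..t, ∑' j, a (j + 1) * convNPow κ j τ := by
  obtain ⟨⟨p, κ₁₀, hp, hp1, hκc₀, hκr₀⟩, ⟨q, k₁₀, hq, hq1, hkc₀, hkr₀⟩, hSon⟩ := h
  obtain ⟨r, hr, hsum⟩ := ha
  intro t ht
  -- globalize the continuous factors
  set κ₁ : ℝ → ℝ := fun x => κ₁₀ (max x 0) with hκ₁def
  have hκ₁c : Continuous κ₁ :=
    hκc₀.comp_continuous (continuous_id.max continuous_const)
      (fun x => mem_Ici.mpr (le_max_right _ _))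
  have hκrep : ∀ x : ℝ, 0 < x → κ x = x^(p-1) * κ₁ x := by
    intro x hx
    rw [hκr₀ x hx, hκ₁def]
    simp [max_eq_left hx.le]
  set k₁ : ℝ → ℝ := fun x => k₁₀ (max x 0) with hk₁def
  have hk₁c : Continuous k₁ :=
    hkc₀.comp_continuous (continuous_id.max continuous_const)
      (fun x => mem_Ici.mpr (le_max_right _ _))
  have hkrep : ∀ x : ℝ, 0 < x → k x = x^(q-1) * k₁ x := by
    intro x hx
    rw [hkr₀ x hx, hk₁def]
    simp [max_eq_left hx.le]
  -- bounds on [0, t]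
  obtain ⟨C₀, hC₀⟩ :=
    (isCompact_Icc (a := (0:ℝ)) (b := t)).exists_bound_of_continuousOn hκ₁c.continuousOn
  set C : ℝ := max C₀ 1 with hCdef
  have hC1 : 0 < C := lt_of_lt_of_le one_pos (le_max_right _ _)
  have hC : ∀ s ∈ Icc (0:ℝ) t, |κ₁ s| ≤ C := fun s hs =>
    le_trans (hC₀ s hs) (le_max_left _ _)
  obtain ⟨K₀, hK₀⟩ :=
    (isCompact_Icc (a := (0:ℝ)) (b := t)).exists_bound_of_continuousOn hk₁c.continuousOn
  set CK : ℝ := max K₀ 0 with hCKdef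
  have hCK0 : 0 ≤ CK := le_max_right _ _
  have hCK : ∀ s ∈ Icc (0:ℝ) t, |k₁ s| ≤ CK := fun s hs =>
    le_trans (hK₀ s hs) (le_max_left _ _)
  -- representation of convolution powers
  choose g hgc hgr hgb using fun n => convNPow_repr hp hκ₁c hκrep ht hC n
  obtain ⟨W, hW0, hWle⟩ := exists_w_bound hp hr hC1 ht
  set βf : ℕ → ℝ := fun j => ((j:ℝ)+1)*p with hβf
  have hβ0 : ∀ j, 0 < βf j := fun j => by positivity
  have hβp : ∀ j, p ≤ βf j := by
    intro j
    show p ≤ ((j:ℝ)+1)*p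
    nlinarith [Nat.cast_nonneg (α := ℝ) j, hp]
  set X : ℕ → ℝ → ℝ := fun j => convNPow κ j with hX
  set D : ℕ → ℝ := fun j => C^(j+1) * Dseq p j with hD
  have hD0 : ∀ j, 0 ≤ D j := fun j => mul_nonneg (pow_nonneg hC1.le _) (Dseq_nonneg p j)
  have hDt : ∀ j, D j * t^(βf j) ≤ W * r^j := by
    intro j
    have h1 := hWle j
    have h2 : C^(j+1) * Dseq p j * t^(((j:ℝ)+1)*p) / r^j * r^j ≤ W * r^j :=
      mul_le_mul_of_nonneg_right h1 (pow_nonneg hr.le j)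
    rwa [div_mul_cancel₀ _ (pow_ne_zero j hr.ne')] at h2
  -- first family : F j τ = k (t-τ) * (a j * X j τ)
  set F : ℕ → ℝ → ℝ := fun j τ => k (t-τ) * (a j * X j τ) with hF
  set φ : ℕ → ℝ → ℝ :=
    fun j τ => ((t-τ)^(q-1) * k₁ (t-τ)) * (a j * (τ^(βf j - 1) * g j τ)) with hφ
  have hφmeas : ∀ j, Measurable (φ j) := by
    intro j
    exact (((measurable_rpow_const' _).comp (measurable_const.sub measurable_id)).mul
      (hk₁c.measurable.comp (measurable_const.sub measurable_id))).mul
      (measurable_const.mul ((measurable_rpow_const' _).mul (hgc j).measurable))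
  have hmaj : ∀ j, IntegrableOn
      (fun τ => (CK * (|a j| * D j)) * ((t-τ)^(q-1) * τ^(βf j - 1))) (Ioc 0 t) volume := by
    intro j
    exact (intervalIntegrable_iff_integrableOn_Ioc_of_le ht.le).mp
      ((intervalIntegrable_beta_scaled hq (hβ0 j) ht).const_mul _)
  have hφbound : ∀ j, ∀ τ ∈ Ioc (0:ℝ) t,
      ‖φ j τ‖ ≤ (CK * (|a j| * D j)) * ((t-τ)^(q-1) * τ^(βf j - 1)) := by
    intro j τ hτ
    have htτ : (0:ℝ) ≤ t - τ := by linarith [hτ.2]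
    have e1 : ‖φ j τ‖ = ((t-τ)^(q-1) * |k₁ (t-τ)|) * (|a j| * (τ^(βf j - 1) * |g j τ|)) := by
      rw [Real.norm_eq_abs, hφ]
      show |((t-τ)^(q-1) * k₁ (t-τ)) * (a j * (τ^(βf j - 1) * g j τ))| = _
      rw [abs_mul ((t-τ)^(q-1) * k₁ (t-τ)), abs_mul ((t-τ)^(q-1)), abs_mul (a j),
        abs_mul (τ^(βf j - 1)), abs_of_nonneg (Real.rpow_nonneg htτ (q-1)),
        abs_of_nonneg (Real.rpow_nonneg hτ.1.le (βf j - 1))]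
    rw [e1]
    have h_k : (t-τ)^(q-1) * |k₁ (t-τ)| ≤ (t-τ)^(q-1) * CK :=
      mul_le_mul_of_nonneg_left (hCK _ ⟨htτ, by linarith [hτ.1]⟩) (Real.rpow_nonneg htτ _)
    have h_g : τ^(βf j - 1) * |g j τ| ≤ τ^(βf j - 1) * D j :=
      mul_le_mul_of_nonneg_left (hgb j τ ⟨hτ.1.le, hτ.2⟩) (Real.rpow_nonneg hτ.1.le _)
    calc ((t-τ)^(q-1) * |k₁ (t-τ)|) * (|a j| * (τ^(βf j - 1) * |g j τ|))
        ≤ ((t-τ)^(q-1) * CK) * (|a j| * (τ^(βf j - 1) * D j)) := by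
          refine mul_le_mul h_k (mul_le_mul_of_nonneg_left h_g (abs_nonneg _)) ?_ ?_
          · exact mul_nonneg (abs_nonneg _)
              (mul_nonneg (Real.rpow_nonneg hτ.1.le _) (abs_nonneg _))
          · exact mul_nonneg (Real.rpow_nonneg htτ _) hCK0
      _ = (CK * (|a j| * D j)) * ((t-τ)^(q-1) * τ^(βf j - 1)) := by ring
  have hφint : ∀ j, IntegrableOn (φ j) (Ioc 0 t) volume := by
    intro j
    refine (hmaj j).mono' (hφmeas j).aestronglyMeasurable ?_
    filter_upwards [ae_restrict_mem measurableSet_Ioc] with τ hτ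
    exact hφbound j τ hτ
  have hFeq : ∀ j, F j =ᵐ[volume.restrict (Ioc (0:ℝ) t)] φ j := by
    intro j
    filter_upwards [ae_restrict_mem measurableSet_Ioc,
      (ae_ne_vol t).filter_mono (ae_mono Measure.restrict_le_self)] with τ hτ hne
    have hτt : τ < t := lt_of_le_of_ne hτ.2 hne
    rw [hF, hφ]
    show k (t-τ) * (a j * X j τ) = _
    rw [hkrep _ (by linarith : 0 < t - τ), hX]
    show _ * (a j * convNPow κ j τ) = _
    rw [hgr j τ hτ.1]
  have hFint : ∀ j, IntegrableOn (F j) (Ioc 0 t) volume :=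
    fun j => (hφint j).congr (hFeq j).symm
  set Sb : ℕ → ℝ := fun j =>
    CK * (|a j| * D j) * (t^(q + βf j - 1) * betaI q (βf j)) with hSb
  have hFnorm : ∀ j, (∫ τ in Ioc (0:ℝ) t, ‖F j τ‖) ≤ Sb j := by
    intro j
    have e0 : (∫ τ in Ioc (0:ℝ) t, ‖F j τ‖) = ∫ τ in Ioc (0:ℝ) t, ‖φ j τ‖ :=
      integral_congr_ae ((hFeq j).mono fun τ hτ => congrArg norm hτ)
    rw [e0]
    have e1 : (∫ τ in Ioc (0:ℝ) t, ‖φ j τ‖)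
        ≤ ∫ τ in Ioc (0:ℝ) t, (CK * (|a j| * D j)) * ((t-τ)^(q-1) * τ^(βf j - 1)) := by
      refine integral_mono_ae ((hφint j).norm) (hmaj j) ?_
      filter_upwards [ae_restrict_mem measurableSet_Ioc] with τ hτ
      exact hφbound j τ hτ
    have e2 : (∫ τ in Ioc (0:ℝ) t, (CK * (|a j| * D j)) * ((t-τ)^(q-1) * τ^(βf j - 1)))
        = CK * (|a j| * D j) * (t^(q + βf j - 1) * betaI q (βf j)) := by
      rw [MeasureTheory.integral_const_mul, ← intervalIntegral.integral_of_le ht.le,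
        beta_scaled_eq ht]
    rw [e2] at e1
    exact le_trans e1 (le_of_eq rfl)
  set A : ℝ := CK * betaI q p * t^(q-1) * W with hA
  have hSb_le : ∀ j, Sb j ≤ A * (|a j| * r^j) := by
    intro j
    have hb1 : betaI q (βf j) ≤ betaI q p := betaI_mono hq hp (hβp j)
    have ht1 : t^(q + βf j - 1) = t^(q-1) * t^(βf j) := by
      rw [show q + βf j - 1 = (q-1) + βf j by ring, Real.rpow_add ht]
    calc Sb j = CK * (|a j| * D j) * (t^(q + βf j - 1) * betaI q (βf j)) := rfl
      _ ≤ CK * (|a j| * D j) * (t^(q + βf j - 1) * betaI q p) := by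
          refine mul_le_mul_of_nonneg_left (mul_le_mul_of_nonneg_left hb1
            (Real.rpow_nonneg ht.le _)) ?_
          exact mul_nonneg hCK0 (mul_nonneg (abs_nonneg _) (hD0 j))
      _ = (CK * betaI q p * t^(q-1)) * (|a j| * (D j * t^(βf j))) := by rw [ht1]; ring
      _ ≤ (CK * betaI q p * t^(q-1)) * (|a j| * (W * r^j)) := by
          refine mul_le_mul_of_nonneg_left (mul_le_mul_of_nonneg_left (hDt j)
            (abs_nonneg _)) ?_
          exact mul_nonneg (mul_nonneg hCK0 (betaI_nonneg q p)) (Real.rpow_nonneg ht.le _)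
      _ = A * (|a j| * r^j) := by rw [hA]; ring
  have hSb0 : ∀ j, 0 ≤ Sb j := by
    intro j
    exact mul_nonneg (mul_nonneg hCK0 (mul_nonneg (abs_nonneg _) (hD0 j)))
      (mul_nonneg (Real.rpow_nonneg ht.le _) (betaI_nonneg _ _))
  have hSbsum : Summable Sb :=
    Summable.of_nonneg_of_le hSb0 hSb_le (hsum.mul_left A)
  have hnormsum : Summable (fun j => ∫ τ in Ioc (0:ℝ) t, ‖F j τ‖) :=
    Summable.of_nonneg_of_le (fun j => integral_nonneg (fun τ => norm_nonneg _))
      hFnorm hSbsum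
  have h1 : (∑' j, ∫ τ in Ioc (0:ℝ) t, F j τ) = ∫ τ in Ioc (0:ℝ) t, ∑' j, F j τ :=
    MeasureTheory.integral_tsum_of_summable_integral_norm hFint hnormsum
  -- identify LHS
  have hLHS : lconv k (fun s => ∑' j, a j * X j s) t = ∑' j, ∫ τ in Ioc (0:ℝ) t, F j τ := by
    rw [h1]
    show (∫ τ in (0:ℝ)..t, k (t - τ) * ∑' j, a j * X j τ) = _
    rw [intervalIntegral.integral_of_le ht.le]
    refine integral_congr_ae (Eventually.of_forall fun τ => ?_)
    exact (tsum_mul_left (a := k (t - τ)) (f := fun j => a j * X j τ)).symm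
  have hterm : ∀ j, (∫ τ in Ioc (0:ℝ) t, F j τ) = a j * lconv k (X j) t := by
    intro j
    have e1 : (∫ τ in Ioc (0:ℝ) t, F j τ) = ∫ τ in Ioc (0:ℝ) t, a j * (k (t-τ) * X j τ) := by
      refine integral_congr_ae (Eventually.of_forall fun τ => ?_)
      show k (t-τ) * (a j * X j τ) = _
      ring
    rw [e1, MeasureTheory.integral_const_mul]
    congr 1
    rw [← intervalIntegral.integral_of_le ht.le]
    rfl
  have hsummable2 : Summable (fun j => a j * lconv k (X j) t) := by
    have hs0 : Summable (fun j => ∫ τ in Ioc (0:ℝ) t, F j τ) :=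
      Summable.of_norm_bounded hSbsum
        (fun j => le_trans (norm_integral_le_integral_norm _) (hFnorm j))
    exact (funext hterm : (fun j => ∫ τ in Ioc (0:ℝ) t, F j τ) = _) ▸ hs0
  have hT0 : lconv k (X 0) t = 1 := by
    show lconv k κ t = 1
    rw [lconv_comm]
    exact hSon t ht
  have hTsucc : ∀ j, lconv k (X (j+1)) t = ∫ τ in (0:ℝ)..t, X j τ := by
    intro j
    show lconv k (lconv κ (X j)) t = _
    exact lconv_sonine hp hq (hβ0 j) hκ₁c hk₁c (hgc j) hκrep hkrep (hgr j) hSon ht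
  -- second family : G j τ = a (j+1) * X j τ
  set G : ℕ → ℝ → ℝ := fun j τ => a (j+1) * X j τ with hG
  set ψ : ℕ → ℝ → ℝ := fun j τ => a (j+1) * (τ^(βf j - 1) * g j τ) with hψ
  have hψmeas : ∀ j, Measurable (ψ j) := fun j =>
    measurable_const.mul ((measurable_rpow_const' _).mul (hgc j).measurable)
  have hmaj2 : ∀ j, IntegrableOn
      (fun τ => (|a (j+1)| * D j) * τ^(βf j - 1)) (Ioc 0 t) volume := by
    intro j
    exact (intervalIntegrable_iff_integrableOn_Ioc_of_le ht.le).mp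
      ((intervalIntegrable_rpow' (by linarith [hβ0 j] : (-1:ℝ) < βf j - 1)).const_mul _)
  have hψbound : ∀ j, ∀ τ ∈ Ioc (0:ℝ) t,
      ‖ψ j τ‖ ≤ (|a (j+1)| * D j) * τ^(βf j - 1) := by
    intro j τ hτ
    have e1 : ‖ψ j τ‖ = |a (j+1)| * (τ^(βf j - 1) * |g j τ|) := by
      rw [Real.norm_eq_abs, hψ]
      show |a (j+1) * (τ^(βf j - 1) * g j τ)| = _
      rw [abs_mul (a (j+1)), abs_mul (τ^(βf j - 1)),
        abs_of_nonneg (Real.rpow_nonneg hτ.1.le (βf j - 1))]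
    rw [e1]
    calc |a (j+1)| * (τ^(βf j - 1) * |g j τ|)
        ≤ |a (j+1)| * (τ^(βf j - 1) * D j) := by
          refine mul_le_mul_of_nonneg_left (mul_le_mul_of_nonneg_left
            (hgb j τ ⟨hτ.1.le, hτ.2⟩) (Real.rpow_nonneg hτ.1.le _)) (abs_nonneg _)
      _ = (|a (j+1)| * D j) * τ^(βf j - 1) := by ring
  have hψint : ∀ j, IntegrableOn (ψ j) (Ioc 0 t) volume := by
    intro j
    refine (hmaj2 j).mono' (hψmeas j).aestronglyMeasurable ?_
    filter_upwards [ae_restrict_mem measurableSet_Ioc] with τ hτ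
    exact hψbound j τ hτ
  have hGeq : ∀ j, G j =ᵐ[volume.restrict (Ioc (0:ℝ) t)] ψ j := by
    intro j
    filter_upwards [ae_restrict_mem measurableSet_Ioc] with τ hτ
    rw [hG, hψ]
    show a (j+1) * X j τ = _
    rw [hX]
    show a (j+1) * convNPow κ j τ = _
    rw [hgr j τ hτ.1]
  have hGint : ∀ j, IntegrableOn (G j) (Ioc 0 t) volume :=
    fun j => (hψint j).congr (hGeq j).symm
  set Sb2 : ℕ → ℝ := fun j => (|a (j+1)| * D j) * (t^(βf j) / βf j) with hSb2
  have hGnorm : ∀ j, (∫ τ in Ioc (0:ℝ) t, ‖G j τ‖) ≤ Sb2 j := by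
    intro j
    have e0 : (∫ τ in Ioc (0:ℝ) t, ‖G j τ‖) = ∫ τ in Ioc (0:ℝ) t, ‖ψ j τ‖ :=
      integral_congr_ae ((hGeq j).mono fun τ hτ => congrArg norm hτ)
    rw [e0]
    have e1 : (∫ τ in Ioc (0:ℝ) t, ‖ψ j τ‖)
        ≤ ∫ τ in Ioc (0:ℝ) t, (|a (j+1)| * D j) * τ^(βf j - 1) := by
      refine integral_mono_ae ((hψint j).norm) (hmaj2 j) ?_
      filter_upwards [ae_restrict_mem measurableSet_Ioc] with τ hτ
      exact hψbound j τ hτ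
    have e2 : (∫ τ in Ioc (0:ℝ) t, (|a (j+1)| * D j) * τ^(βf j - 1))
        = (|a (j+1)| * D j) * (t^(βf j) / βf j) := by
      rw [MeasureTheory.integral_const_mul, ← intervalIntegral.integral_of_le ht.le,
        integral_rpow (Or.inl (by linarith [hβ0 j] : (-1:ℝ) < βf j - 1)),
        show βf j - 1 + 1 = βf j by ring, Real.zero_rpow (hβ0 j).ne']
      ring
    rw [e2] at e1
    exact e1
  set A2 : ℝ := W / (p * r) with hA2
  have hSb2_le : ∀ j, Sb2 j ≤ A2 * (|a (j+1)| * r^(j+1)) := by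
    intro j
    have h1 : t^(βf j) / βf j ≤ t^(βf j) / p :=
      div_le_div_of_nonneg_left (Real.rpow_nonneg ht.le _) hp (hβp j)
    calc Sb2 j ≤ (|a (j+1)| * D j) * (t^(βf j) / p) := by
          refine mul_le_mul_of_nonneg_left h1 (mul_nonneg (abs_nonneg _) (hD0 j))
      _ = |a (j+1)| * (D j * t^(βf j)) / p := by ring
      _ ≤ |a (j+1)| * (W * r^j) / p := by
          exact (div_le_div_iff_of_pos_right hp).mpr
            (mul_le_mul_of_nonneg_left (hDt j) (abs_nonneg _))
      _ = A2 * (|a (j+1)| * r^(j+1)) := by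
          rw [hA2, pow_succ]
          field_simp
  have hSb20 : ∀ j, 0 ≤ Sb2 j := fun j =>
    mul_nonneg (mul_nonneg (abs_nonneg _) (hD0 j))
      (div_nonneg (Real.rpow_nonneg ht.le _) (hβ0 j).le)
  have hsum' : Summable (fun j => |a (j+1)| * r^(j+1)) :=
    (summable_nat_add_iff 1).mpr hsum
  have hSb2sum : Summable Sb2 :=
    Summable.of_nonneg_of_le hSb20 hSb2_le (hsum'.mul_left A2)
  have hnormsum2 : Summable (fun j => ∫ τ in Ioc (0:ℝ) t, ‖G j τ‖) :=
    Summable.of_nonneg_of_le (fun j => integral_nonneg (fun τ => norm_nonneg _))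
      hGnorm hSb2sum
  have h2 : (∑' j, ∫ τ in Ioc (0:ℝ) t, G j τ) = ∫ τ in Ioc (0:ℝ) t, ∑' j, G j τ :=
    MeasureTheory.integral_tsum_of_summable_integral_norm hGint hnormsum2
  have hGterm : ∀ j, (∫ τ in Ioc (0:ℝ) t, G j τ) = a (j+1) * ∫ τ in (0:ℝ)..t, X j τ := by
    intro j
    rw [show (fun τ => G j τ) = fun τ => a (j+1) * X j τ from rfl]
    rw [MeasureTheory.integral_const_mul, ← intervalIntegral.integral_of_le ht.le]
  -- assemble
  calc lconv k (fun s => ∑' j, a j * X j s) t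
      = ∑' j, ∫ τ in Ioc (0:ℝ) t, F j τ := hLHS
    _ = ∑' j, a j * lconv k (X j) t := tsum_congr hterm
    _ = a 0 * lconv k (X 0) t + ∑' j, a (j+1) * lconv k (X (j+1)) t :=
        Summable.tsum_eq_zero_add hsummable2
    _ = a 0 + ∑' j, a (j+1) * ∫ τ in (0:ℝ)..t, X j τ := by
        rw [hT0, mul_one]
        congr 1
        exact tsum_congr fun j => by rw [hTsucc j]
    _ = a 0 + ∑' j, ∫ τ in Ioc (0:ℝ) t, G j τ := by
        congr 1
        exact tsum_congr fun j => (hGterm j).symm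
    _ = a 0 + ∫ τ in Ioc (0:ℝ) t, ∑' j, G j τ := by rw [h2]
    _ = a 0 + ∫ τ in (0:ℝ)..t, ∑' j, a (j + 1) * convNPow κ j τ := by
        rw [← intervalIntegral.integral_of_le ht.le]
end
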